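/- arXiv:2007.05459 — 4 statements merged into one kernel-verified Lean document; each statement's English description precedes it below -/
import Mathlib

section
/- The class of finite ordered σ_1-structures satisfying SomeTotalR_1 is closed under extensions within finite ordered structures: if a finite ordered σ_1-structure A satisfies SomeTotalR_1 and A is a substructure of a finite ordered σ_1-structure B, then B satisfies SomeTotalR_1. -/
open FirstOrder Language

namespace Paper

variable {L : FirstOrder.Language} {α : Type*}

/-! ### Prefix classes `Σ_{n,k}` and `Π_{n,k}` -/

/-- Prepend a block of `j` existential quantifiers to a bounded formula. -/
def exN : ∀ (j : ℕ) {m : ℕ}, L.BoundedFormula α (m + j) → L.BoundedFormula α m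
  | 0, _, φ => φ
  | j + 1, _, φ => exN j φ.ex

/-- Prepend a block of `j` universal quantifiers to a bounded formula. -/
def allN : ∀ (j : ℕ) {m : ℕ}, L.BoundedFormula α (m + j) → L.BoundedFormula α m
  | 0, _, φ => φ
  | j + 1, _, φ => allN j φ.all

/-- `IsSigmaPi k b n m φ` says that the formula `φ` is in prenex form with at most `n`
alternating blocks of at most `k` quantifiers, starting with an existential block when
`b = true` (the class `Σ_{n,k}`) and with a universal block when `b = false` (`Π_{n,k}`). -/
def IsSigmaPi (k : ℕ) : Bool → ℕ → ∀ m : ℕ, L.BoundedFormula α m → Prop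
  | _, 0, _, φ => φ.IsQF
  | b, n + 1, m, φ =>
      IsSigmaPi k (!b) n m φ ∨
        ∃ j : ℕ, j ≤ k ∧ ∃ ψ : L.BoundedFormula α (m + j),
          IsSigmaPi k (!b) n (m + j) ψ ∧ φ = if b then exN j ψ else allN j ψ

/-- `φ` is a `Σ_{n,k}` formula. -/
abbrev IsSigma (n k : ℕ) {m : ℕ} (φ : L.BoundedFormula α m) : Prop :=
  IsSigmaPi k true n m φ

/-- `φ` is a `Π_{n,k}` formula. -/
abbrev IsPi (n k : ℕ) {m : ℕ} (φ : L.BoundedFormula α m) : Prop :=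
  IsSigmaPi k false n m φ

/-! ### The relations `⇛_{n,k}` and `≡_{n,k}` -/

/-- `A ⇛_{n,k} B` : every `Σ_{n,k}` sentence true in `A` is true in `B`. -/
def SigImp (L : FirstOrder.Language) (n k : ℕ) (A : Type*) (B : Type*)
    [L.Structure A] [L.Structure B] : Prop :=
  ∀ φ : L.Sentence, IsSigma n k φ → A ⊨ φ → B ⊨ φ

/-- `A ≡_{n,k} B`. -/
def SigEquiv (L : FirstOrder.Language) (n k : ℕ) (A : Type*) (B : Type*)
    [L.Structure A] [L.Structure B] : Prop :=
  SigImp L n k A B ∧ SigImp L n k B A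

/-- `(A, ā) ⇛_{n,k} (B, b̄)` : every `Σ_{n,k}` formula satisfied by `ā` in `A` is satisfied
by `b̄` in `B`. -/
def SigImpT (L : FirstOrder.Language) (n k : ℕ) {l : ℕ} (A : Type*) [L.Structure A]
    (a : Fin l → A) (B : Type*) [L.Structure B] (b : Fin l → B) : Prop :=
  ∀ φ : L.Formula (Fin l), IsSigma n k φ → φ.Realize a → φ.Realize b

/-! ### Quantifier rank -/

/-- The quantifier rank of a formula. -/
def qrank : ∀ {m : ℕ}, L.BoundedFormula α m → ℕ
  | _, BoundedFormula.falsum => 0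
  | _, BoundedFormula.equal _ _ => 0
  | _, BoundedFormula.rel _ _ => 0
  | _, BoundedFormula.imp f g => max (qrank f) (qrank g)
  | _, BoundedFormula.all f => qrank f + 1

/-- `A ≡_m B` : `A` and `B` satisfy the same sentences of quantifier rank at most `m`. -/
def RankEquiv (L : FirstOrder.Language) (m : ℕ) (A : Type*) (B : Type*)
    [L.Structure A] [L.Structure B] : Prop :=
  ∀ φ : L.Sentence, qrank φ ≤ m → (A ⊨ φ ↔ B ⊨ φ)

/-! ### Ordered structures -/

/-- The interpretation of a distinguished binary relation symbol. -/
def rle (le : L.Relations 2) {A : Type*} [L.Structure A] (x y : A) : Prop :=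
  Structure.RelMap le ![x, y]

/-- The distinguished binary relation symbol `le` is interpreted as a linear order. -/
def IsOrderedLe (le : L.Relations 2) (A : Type*) [L.Structure A] : Prop :=
  (∀ x : A, rle le x x) ∧
    (∀ x y : A, rle le x y → rle le y x → x = y) ∧
    (∀ x y z : A, rle le x y → rle le y z → rle le x z) ∧
    (∀ x y : A, rle le x y ∨ rle le y x)

/-- `x` is the minimum element w.r.t. the interpretation of `le`. -/
def IsMinimal (le : L.Relations 2) {A : Type*} [L.Structure A] (x : A) : Prop :=
  ∀ y, rle le x y

/-- `x` is the maximum element w.r.t. the interpretation of `le`. -/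
def IsMaximal (le : L.Relations 2) {A : Type*} [L.Structure A] (x : A) : Prop :=
  ∀ y, rle le y x

/-- The function `ρ`: `ρ(1,k) = 2k+2` and `ρ(n+1,k) = (k+2)(ρ(n,k)+1)`. -/
def rho : ℕ → ℕ → ℕ
  | 0, _ => 0
  | 1, k => 2 * k + 2
  | n + 2, k => (k + 2) * (rho (n + 1) k + 1)

/-! ### Starred structures:  `A*` is `A` with constants for its min and max elements.
Satisfaction of (prefix-class) sentences of the enlarged vocabulary in `A*` corresponds to
satisfaction of (prefix-class) formulas in two extra free variables, instantiated to the
minimum and the maximum. -/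

/-- `A* ⇛_{n,k} B*`. -/
def SigImpStar (L : FirstOrder.Language) (n k : ℕ) (A : Type*) [L.Structure A]
    (mnA mxA : A) (B : Type*) [L.Structure B] (mnB mxB : B) : Prop :=
  SigImpT L n k A ![mnA, mxA] B ![mnB, mxB]

/-- The tuple `ā` extended by the two distinguished constants. -/
def starT {A : Type*} {l : ℕ} (a : Fin l → A) (mn mx : A) : Fin (l + 2) → A :=
  Fin.append a ![mn, mx]

/-- `(A, ā)* ⇛_{n,k} (B, b̄)*`. -/
def SigImpTStar (L : FirstOrder.Language) (n k : ℕ) {l : ℕ} (A : Type*) [L.Structure A]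
    (a : Fin l → A) (mnA mxA : A) (B : Type*) [L.Structure B] (b : Fin l → B)
    (mnB mxB : B) : Prop :=
  SigImpT L n k A (starT a mnA mxA) B (starT b mnB mxB)

/-! ### Ordered sums -/

/-- `C`, together with the inclusion maps `f : A → C` and `g : B → C`, is the ordered sum
`A ⊕ B`: the maximum of `A` is identified with the minimum of `B`, the order places `A`
below `B`, and every other relation symbol is interpreted by the union of its
interpretations. -/
structure IsOrderedSum2 (L : FirstOrder.Language) (le : L.Relations 2)
    (A B C : Type*) [L.Structure A] [L.Structure B] [L.Structure C]
    (mxA : A) (mnB : B) (f : A → C) (g : B → C) : Prop where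
  injf : Function.Injective f
  injg : Function.Injective g
  cover : ∀ c : C, (∃ a, f a = c) ∨ (∃ b, g b = c)
  glue : f mxA = g mnB
  overlap : ∀ a b, f a = g b → a = mxA ∧ b = mnB
  le_iff : ∀ c c' : C, rle le c c' ↔
      ((∃ a a', f a = c ∧ f a' = c' ∧ rle le a a') ∨
       (∃ b b', g b = c ∧ g b' = c' ∧ rle le b b') ∨
       (∃ a b, f a = c ∧ g b = c'))
  rel_iff : ∀ (m : ℕ) (r : L.Relations m) (v : Fin m → C), ¬(m = 2 ∧ HEq r le) →
      (Structure.RelMap r v ↔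
        (∃ w : Fin m → A, (∀ p, f (w p) = v p) ∧ Structure.RelMap r w) ∨
        (∃ w : Fin m → B, (∀ p, g (w p) = v p) ∧ Structure.RelMap r w))

/-- `C`, together with the inclusion maps `f i : M i → C`, is the iterated ordered sum
`⊕_{i} M i` (where `mn i`/`mx i` are the minimum/maximum of `M i`). -/
structure IsOrderedSumSeq (L : FirstOrder.Language) (le : L.Relations 2) (s : ℕ)
    (M : Fin s → Type*) [∀ i, L.Structure (M i)] (mn mx : ∀ i, M i)
    (C : Type*) [L.Structure C] (f : ∀ i, M i → C) : Prop where
  inj : ∀ i, Function.Injective (f i)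
  cover : ∀ c : C, ∃ i a, f i a = c
  glue : ∀ (i : Fin s) (h : i.1 + 1 < s), f i (mx i) = f ⟨i.1 + 1, h⟩ (mn ⟨i.1 + 1, h⟩)
  overlap : ∀ (i j : Fin s) (a : M i) (b : M j), i < j → f i a = f j b →
      j.1 = i.1 + 1 ∧ a = mx i ∧ b = mn j
  le_iff : ∀ c c' : C, rle le c c' ↔
      ((∃ i a b, f i a = c ∧ f i b = c' ∧ rle le a b) ∨
       (∃ i j a b, i < j ∧ f i a = c ∧ f j b = c'))
  rel_iff : ∀ (m : ℕ) (r : L.Relations m) (v : Fin m → C), ¬(m = 2 ∧ HEq r le) →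
      (Structure.RelMap r v ↔
        ∃ i, ∃ w : Fin m → M i, (∀ p, f i (w p) = v p) ∧ Structure.RelMap r w)

/-! ### The (n,k)-prefix Ehrenfeucht–Fraïssé game -/

/-- The history of the play before round `i`. -/
def histOf {A B : Type*} {k : ℕ} (n : ℕ) (a : Fin n → Fin k → A) (b : Fin n → Fin k → B)
    (i : Fin n) : List ((Fin k → A) × (Fin k → B)) :=
  List.ofFn (fun j : Fin i.1 => (a ⟨j.1, j.2.trans i.2⟩, b ⟨j.1, j.2.trans i.2⟩))

/-- A strategy for Duplicator: responses to Spoiler moves in `A` and in `B`,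
given the history of earlier rounds. -/
structure DupStrategy (L : FirstOrder.Language) (k : ℕ) (A B : Type*)
    [L.Structure A] [L.Structure B] where
  respB : List ((Fin k → A) × (Fin k → B)) → (Fin k → A) → (Fin k → B)
  respA : List ((Fin k → A) × (Fin k → B)) → (Fin k → B) → (Fin k → A)

/-- A play `(a, b)` of the `(n,k)`-prefix EF game is consistent with Duplicator's strategy:
in odd rounds (`i.1` even) Spoiler moves in `A` and Duplicator responds in `B`, in even
rounds Spoiler moves in `B` and Duplicator responds in `A`. -/
def DupStrategy.Consistent {A B : Type*} [L.Structure A] [L.Structure B] {k : ℕ}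
    (st : DupStrategy L k A B) (n : ℕ)
    (a : Fin n → Fin k → A) (b : Fin n → Fin k → B) : Prop :=
  ∀ i : Fin n,
    (i.1 % 2 = 0 → b i = st.respB (histOf n a b i) (a i)) ∧
    (i.1 % 2 = 1 → a i = st.respA (histOf n a b i) (b i))

/-- The map sending `a` pointwise to `b` is a partial isomorphism (for a relational
language). -/
def IsPartialIso (L : FirstOrder.Language) {ι : Type*} (A B : Type*)
    [L.Structure A] [L.Structure B] (a : ι → A) (b : ι → B) : Prop :=
  (∀ p q : ι, a p = a q ↔ b p = b q) ∧
    ∀ (m : ℕ) (r : L.Relations m) (v : Fin m → ι),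
      (Structure.RelMap r (a ∘ v) ↔ Structure.RelMap r (b ∘ v))

/-- Duplicator's strategy is winning in the `(n,k)`-prefix EF game. -/
def DupStrategy.Winning {A B : Type*} [L.Structure A] [L.Structure B] {k : ℕ}
    (st : DupStrategy L k A B) (n : ℕ) : Prop :=
  ∀ (a : Fin n → Fin k → A) (b : Fin n → Fin k → B), st.Consistent n a b →
    IsPartialIso L A B (fun p : Fin n × Fin k => a p.1 p.2) (fun p : Fin n × Fin k => b p.1 p.2)


/-! ### The vocabularies `σ_n` -/

/-- Indices `i` with `2 ≤ i ≤ n`, indexing the symbols `P_i, S_i, R_i` of `σ_n`. -/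
abbrev HighIdx (n : ℕ) : Type := {i : ℕ // 2 ≤ i ∧ i ≤ n}

/-- The vocabulary `σ_n`: binary symbols `≤, S, R` and `S_i, R_i` (for `2 ≤ i ≤ n`),
and unary symbols `P_i` (for `2 ≤ i ≤ n`).  In particular `σ_1` has exactly the three
binary symbols `≤, S, R`. -/
def sig (n : ℕ) : FirstOrder.Language where
  Functions := fun _ => Empty
  Relations := fun m =>
    match m with
    | 1 => HighIdx n
    | 2 => (Fin 3) ⊕ (HighIdx n × Bool)
    | _ => Empty

/-- The symbol `≤` of `σ_n`. -/
def leSym (n : ℕ) : (sig n).Relations 2 := Sum.inl 0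
/-- The symbol `S` of `σ_n`. -/
def sSym (n : ℕ) : (sig n).Relations 2 := Sum.inl 1
/-- The symbol `R` of `σ_n`. -/
def rSym (n : ℕ) : (sig n).Relations 2 := Sum.inl 2
/-- The symbol `S_i` of `σ_n`. -/
def snSym (n i : ℕ) (h : 2 ≤ i ∧ i ≤ n) : (sig n).Relations 2 := Sum.inr (⟨i, h⟩, false)
/-- The symbol `R_i` of `σ_n`. -/
def rnSym (n i : ℕ) (h : 2 ≤ i ∧ i ≤ n) : (sig n).Relations 2 := Sum.inr (⟨i, h⟩, true)
/-- The symbol `P_i` of `σ_n`. -/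
def pnSym (n i : ℕ) (h : 2 ≤ i ∧ i ≤ n) : (sig n).Relations 1 := ⟨i, h⟩

/-! ### Semantics of the sentences `SomeTotalR_n` -/

/-- A bundle of interpretations of all the symbols of the vocabularies `σ_n` over a
universe `A`. -/
structure Interp (A : Type*) where
  le : A → A → Prop
  S : A → A → Prop
  R : A → A → Prop
  Sn : ℕ → A → A → Prop
  Rn : ℕ → A → A → Prop
  Pn : ℕ → A → Prop

variable {A : Type*}

/-- `x < y` as an abbreviation for `x ≤ y ∧ x ≠ y`. -/
def Interp.lt (I : Interp A) (x y : A) : Prop := I.le x y ∧ x ≠ y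

/-- `STR I m D` is the meaning of the sentence `SomeTotalR_{m+1}` with all quantifiers
relativized to the set `D`.
For `m = 0`: `¬PartialSucc ∨ ∃ x y (R(x,y) ∧ Total(x,y))` where `PartialSucc` says that
`S(x,y)` implies `y` is the immediate `≤`-successor of `x`, and `Total(x,y)` says that
`x < y` and every `z` in `[x,y)` has an `S`-successor within `(z,y]`.
For `m+1` (i.e. `SomeTotalR_n`, `n = m+2`): the same with `S` replaced by
`Succ_n(x,y) := P_n(x) ∧ P_n(y) ∧ S_n(x,y) ∧ (SomeTotalR_{n-1})^{[x,y]}`, the quantifier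
in `PartialSucc_n` and `Total_n` relativized to `P_n`, and `R` replaced by `R_n`. -/
def STR (I : Interp A) : ℕ → (A → Prop) → Prop
  | 0, D =>
      (¬ ∀ x y, D x → D y → I.S x y →
          (I.lt x y ∧ ∀ z, D z → ¬(I.lt x z ∧ I.lt z y))) ∨
      ∃ x y, D x ∧ D y ∧ I.R x y ∧
        (I.lt x y ∧ ∀ z, D z → I.le x z → I.lt z y →
          ∃ w, D w ∧ I.lt z w ∧ I.le w y ∧ I.S z w)
  | m + 1, D =>
      let nn := m + 2
      let Succn : A → A → Prop := fun x y =>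
        I.Pn nn x ∧ I.Pn nn y ∧ I.Sn nn x y ∧
          (I.le x y ∧ STR I m (fun z => D z ∧ I.le x z ∧ I.le z y))
      (¬ ∀ x y, D x → D y → Succn x y →
          ∀ z, D z → I.Pn nn z → I.le z x ∨ I.le y z) ∨
      ∃ x y, D x ∧ D y ∧ I.Rn nn x y ∧
        (I.lt x y ∧ ∀ z, D z → I.Pn nn z → I.le x z → I.lt z y →
          ∃ w, D w ∧ I.lt z w ∧ I.le w y ∧ Succn z w)

/-- The meaning of the sentence `SomeTotalR_n` (for `n ≥ 1`). -/
def SomeTotalRSem (n : ℕ) (I : Interp A) : Prop :=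
  STR I (n - 1) (fun _ => True)

/-- The interpretation bundle determined by a `σ_n`-structure. -/
def interpOf (n : ℕ) (A : Type*) [(sig n).Structure A] : Interp A where
  le := fun x y => FirstOrder.Language.Structure.RelMap (leSym n) ![x, y]
  S := fun x y => FirstOrder.Language.Structure.RelMap (sSym n) ![x, y]
  R := fun x y => FirstOrder.Language.Structure.RelMap (rSym n) ![x, y]
  Sn := fun i x y => ∃ h : 2 ≤ i ∧ i ≤ n,
    FirstOrder.Language.Structure.RelMap (snSym n i h) ![x, y]
  Rn := fun i x y => ∃ h : 2 ≤ i ∧ i ≤ n,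
    FirstOrder.Language.Structure.RelMap (rnSym n i h) ![x, y]
  Pn := fun i x => ∃ h : 2 ≤ i ∧ i ≤ n,
    FirstOrder.Language.Structure.RelMap (pnSym n i h) ![x]

/-- The `σ_n`-structure determined by an interpretation bundle. -/
def strOf (n : ℕ) {A : Type*} (I : Interp A) : (sig n).Structure A where
  funMap := fun {m} f _ => Empty.elim f
  RelMap := fun {m} =>
    match m with
    | 0 => fun r _ => Empty.elim r
    | 1 => fun r v => I.Pn r.1 (v 0)
    | 2 => fun r v =>
        match r with
        | Sum.inl i =>
            if i = 0 then I.le (v 0) (v 1)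
            else if i = 1 then I.S (v 0) (v 1) else I.R (v 0) (v 1)
        | Sum.inr (j, b) => if b then I.Rn j.1 (v 0) (v 1) else I.Sn j.1 (v 0) (v 1)
    | _ + 3 => fun r _ => Empty.elim r

/-! ### Concrete construction of the structures `Tot_{n,k}`, `Gap_{n,k}`, `M_{n,k}`, `N_{n,k}` -/

/-- A finite ordered `σ`-interpretation with universe `{0, …, last}` (i.e. `Fin (last+1)`),
where `≤` is the natural linear order; the remaining relations are given as predicates on
the underlying natural numbers. -/
structure NInterp where
  last : ℕ
  S : ℕ → ℕ → Prop
  R : ℕ → ℕ → Prop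
  Sn : ℕ → ℕ → ℕ → Prop
  Rn : ℕ → ℕ → ℕ → Prop
  Pn : ℕ → ℕ → Prop

/-- The universe of an `NInterp`. -/
abbrev NInterp.Carrier (I : NInterp) : Type := Fin (I.last + 1)

/-- The interpretation bundle of an `NInterp`. -/
def NInterp.toInterp (I : NInterp) : Interp I.Carrier where
  le := fun x y => x ≤ y
  S := fun x y => I.S x.1 y.1
  R := fun x y => I.R x.1 y.1
  Sn := fun i x y => I.Sn i x.1 y.1
  Rn := fun i x y => I.Rn i x.1 y.1
  Pn := fun i x => I.Pn i x.1

/-- The ordered sum of two `NInterp`s: the maximum (`I.last`) of the first is identified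
with the minimum (`0`) of the second, and all relations other than `≤` are unions. -/
def glue2 (I J : NInterp) : NInterp where
  last := I.last + J.last
  S := fun x y => I.S x y ∨ ∃ a b, J.S a b ∧ x = I.last + a ∧ y = I.last + b
  R := fun x y => I.R x y ∨ ∃ a b, J.R a b ∧ x = I.last + a ∧ y = I.last + b
  Sn := fun i x y => I.Sn i x y ∨ ∃ a b, J.Sn i a b ∧ x = I.last + a ∧ y = I.last + b
  Rn := fun i x y => I.Rn i x y ∨ ∃ a b, J.Rn i a b ∧ x = I.last + a ∧ y = I.last + b
  Pn := fun i x => I.Pn i x ∨ ∃ a, J.Pn i a ∧ x = I.last + a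

/-- Iterated ordered sum `I ⊕ J₁ ⊕ ⋯ ⊕ Jₘ`. -/
def glueList : NInterp → List NInterp → NInterp
  | I, [] => I
  | I, J :: rest => glueList (glue2 I J) rest

/-- The ordered sum of `c` copies of `I` (for `c ≥ 1`). -/
def glueRep (I : NInterp) (c : ℕ) : NInterp :=
  glueList I (List.replicate (c - 1) I)

/-- `Tot_{1,k}` : universe of size `m = 6(k+2)²`, `S` the full successor relation,
`R = {(min, max)}`. -/
def Tot1 (k : ℕ) : NInterp where
  last := 6 * (k + 2) ^ 2 - 1
  S := fun x y => y = x + 1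
  R := fun x y => x = 0 ∧ y = 6 * (k + 2) ^ 2 - 1
  Sn := fun _ _ _ => False
  Rn := fun _ _ _ => False
  Pn := fun _ _ => False

/-- `Gap_{1,k}` : as `Tot_{1,k}` but with the central successor pair
`(m/2, m/2+1)` (1-indexed) removed from `S`. -/
def Gap1 (k : ℕ) : NInterp where
  last := 6 * (k + 2) ^ 2 - 1
  S := fun x y => y = x + 1 ∧ y ≠ 3 * (k + 2) ^ 2
  R := fun x y => x = 0 ∧ y = 6 * (k + 2) ^ 2 - 1
  Sn := fun _ _ _ => False
  Rn := fun _ _ _ => False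
  Pn := fun _ _ => False

/-- The expansion `A ↦ A⁺` from `σ_{n-1}` to `σ_n`: `P_n = {min, max}`,
`S_n = {(min, max)}`, `R_n = ∅`. -/
def plusN (n : ℕ) (I : NInterp) : NInterp where
  last := I.last
  S := I.S
  R := I.R
  Sn := fun i x y => I.Sn i x y ∨ (i = n ∧ x = 0 ∧ y = I.last)
  Rn := I.Rn
  Pn := fun i x => I.Pn i x ∨ (i = n ∧ (x = 0 ∨ x = I.last))

/-- Add the pair `(min, max)` to the relation `R_n`. -/
def addRn (n : ℕ) (I : NInterp) : NInterp :=
  { I with Rn := fun i x y => I.Rn i x y ∨ (i = n ∧ x = 0 ∧ y = I.last) }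

/-- `fam m k = (Tot_{m+1,k}, Gap_{m+1,k}, M_{m+1,k}, N_{m+1,k})`, by the inductive
construction:
* `N_{n,k}` is the ordered sum of `4(k+3)^{2n+1} + 2k + 1` copies of `Gap_{n,k}` and
  `M_{n,k}` is obtained from it by replacing the central copy with `Tot_{n,k}`;
* for `n ≥ 2`, `Tot_{n,k}` is obtained from the ordered sum of `4(k+3)^{2n} + 2k + 1`
  copies of `M⁺_{n-1,k}` by adding `(min, max)` to `R_n`, and `Gap_{n,k}` is obtained from
  it by replacing the central copy with `N⁺_{n-1,k}`. -/
def fam : ℕ → ℕ → NInterp × NInterp × NInterp × NInterp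
  | 0, k =>
      let T := Tot1 k
      let G := Gap1 k
      let half := 2 * (k + 3) ^ 3 + k
      (T, G,
        glueList (glueRep G half) (T :: List.replicate half G),
        glueRep G (4 * (k + 3) ^ 3 + 2 * k + 1))
  | m + 1, k =>
      let p := fam m k
      let nn := m + 2
      let Mp := plusN nn p.2.2.1
      let Np := plusN nn p.2.2.2
      let halfT := 2 * (k + 3) ^ (2 * nn) + k
      let T := addRn nn (glueRep Mp (4 * (k + 3) ^ (2 * nn) + 2 * k + 1))
      let G := addRn nn (glueList (glueRep Mp halfT) (Np :: List.replicate halfT Mp))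
      let halfN := 2 * (k + 3) ^ (2 * nn + 1) + k
      (T, G,
        glueList (glueRep G halfN) (T :: List.replicate halfN G),
        glueRep G (4 * (k + 3) ^ (2 * nn + 1) + 2 * k + 1))

/-- The structure `Tot_{n,k}`. -/
def TotNK (n k : ℕ) : NInterp := (fam (n - 1) k).1
/-- The structure `Gap_{n,k}`. -/
def GapNK (n k : ℕ) : NInterp := (fam (n - 1) k).2.1
/-- The structure `M_{n,k}`. -/
def MNK (n k : ℕ) : NInterp := (fam (n - 1) k).2.2.1
/-- The structure `N_{n,k}`. -/
def NNK (n k : ℕ) : NInterp := (fam (n - 1) k).2.2.2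

/-- The `σ_n`-structure on the universe of an `NInterp`. -/
def strOfN (n : ℕ) (I : NInterp) : (sig n).Structure I.Carrier :=
  strOf n I.toInterp

/-!
If `PartialSucc` fails in `A`, the offending `S`-pair maps to one in `B`. Otherwise let
`R(x,y) ∧ Total(x,y)` hold in `A`; we may assume `PartialSucc` holds in `B`, so every `S`-pair
of `B` is a covering pair of its order. Starting from `x` and following `S`-successors inside
`[x,y]` then climbs through `B` one covering step at a time, so every point of `B` between
`x` and `y` lies in `A`, and `Total(x,y)` in `A` gives `Total(x,y)` in `B`.
-/

theorem _root_.FirstOrder.Language.Embedding.map_rel_pair {M N : Type*} [L.Structure M]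
    [L.Structure N] (emb : M ↪[L] N) (r : L.Relations 2) (a b : M) :
    Structure.RelMap r ![emb a, emb b] ↔ Structure.RelMap r ![a, b] := by
  convert emb.map_rel r ![a, b] using 2
  ext i
  fin_cases i <;> rfl

theorem Icc_subset_of_forall_exists_covBy {α : Type*} [LinearOrder α] [WellFoundedLT α]
    [IsStronglyCoatomic α] {P : Set α} {u v : α} (hu : u ∈ P)
    (hstep : ∀ p ∈ P, u ≤ p → p < v → ∃ q ∈ P, p ⋖ q) : Set.Icc u v ⊆ P := by
  intro z
  induction z using WellFoundedLT.induction with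
  | ind z ih =>
    rintro ⟨huz, hzv⟩
    rcases huz.eq_or_lt with rfl | huz
    · exact hu
    obtain ⟨p, hup, hpz⟩ := exists_le_covBy_of_lt huz
    have hp : p ∈ P := ih p hpz.lt ⟨hup, hpz.lt.le.trans hzv⟩
    obtain ⟨q, hq, hpq⟩ := hstep p hp hup (hpz.lt.trans_le hzv)
    exact hpq.unique_right hpz ▸ hq

noncomputable abbrev IsOrderedLe.toLinearOrder {le : L.Relations 2} [L.Structure A]
    (h : IsOrderedLe le A) : LinearOrder A where
  le := rle le
  le_refl := h.1
  le_trans := h.2.2.1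
  le_antisymm := h.2.1
  le_total := h.2.2.2
  toDecidableLE := Classical.decRel _

def Interp.PartialSucc (I : Interp A) : Prop :=
  ∀ x y, I.S x y → I.lt x y ∧ ∀ z, ¬(I.lt x z ∧ I.lt z y)

def Interp.Total (I : Interp A) (x y : A) : Prop :=
  I.lt x y ∧ ∀ z, I.le x z → I.lt z y → ∃ w, I.lt z w ∧ I.le w y ∧ I.S z w

theorem someTotalRSem_one_iff (I : Interp A) :
    SomeTotalRSem 1 I ↔ ¬I.PartialSucc ∨ ∃ x y, I.R x y ∧ I.Total x y := by
  simp [SomeTotalRSem, STR, Interp.PartialSucc, Interp.Total]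

section Embedding

variable {n : ℕ} {B : Type*} [(sig n).Structure A] [(sig n).Structure B]

theorem interpOf_le_embedding (emb : A ↪[sig n] B) (a b : A) :
    (interpOf n B).le (emb a) (emb b) ↔ (interpOf n A).le a b :=
  emb.map_rel_pair _ a b

theorem interpOf_S_embedding (emb : A ↪[sig n] B) (a b : A) :
    (interpOf n B).S (emb a) (emb b) ↔ (interpOf n A).S a b :=
  emb.map_rel_pair _ a b

theorem interpOf_R_embedding (emb : A ↪[sig n] B) (a b : A) :
    (interpOf n B).R (emb a) (emb b) ↔ (interpOf n A).R a b :=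
  emb.map_rel_pair _ a b

theorem interpOf_lt_embedding (emb : A ↪[sig n] B) (a b : A) :
    (interpOf n B).lt (emb a) (emb b) ↔ (interpOf n A).lt a b := by
  simp only [Interp.lt, interpOf_le_embedding, ne_eq, emb.injective.eq_iff]

theorem Interp.PartialSucc.of_embedding (emb : A ↪[sig n] B) (h : (interpOf n B).PartialSucc) :
    (interpOf n A).PartialSucc := by
  intro x y hxy
  obtain ⟨hlt, hnone⟩ := h (emb x) (emb y) ((interpOf_S_embedding emb x y).2 hxy)
  refine ⟨(interpOf_lt_embedding emb x y).1 hlt, fun z hz => hnone (emb z) ?_⟩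
  simpa only [interpOf_lt_embedding] using hz

theorem Interp.Total.map_embedding [Finite B] (emb : A ↪[sig n] B)
    (hB : IsOrderedLe (leSym n) B) (hsucc : (interpOf n B).PartialSucc) {x y : A}
    (hxy : (interpOf n A).Total x y) :
    (interpOf n B).Total (emb x) (emb y) := by
  let _ := hB.toLinearOrder
  have hle (u v : B) : (interpOf n B).le u v ↔ u ≤ v := Iff.rfl
  have hlt (u v : B) : (interpOf n B).lt u v ↔ u < v := (lt_iff_le_and_ne (α := B)).symm
  have hcov (u v : B) (huv : (interpOf n B).S u v) : u ⋖ v := by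
    obtain ⟨huv, hnone⟩ := hsucc u v huv
    exact ⟨(hlt u v).1 huv, fun z huz hzv => hnone z ⟨(hlt u z).2 huz, (hlt z v).2 hzv⟩⟩
  simp only [Interp.Total, ← interpOf_le_embedding emb, ← interpOf_lt_embedding emb,
    ← interpOf_S_embedding emb, hle, hlt] at hxy ⊢
  obtain ⟨hxy, hstep⟩ := hxy
  have hcover : Set.Icc (emb x) (emb y) ⊆ Set.range emb := by
    refine Icc_subset_of_forall_exists_covBy ⟨x, rfl⟩ ?_
    rintro _ ⟨a, rfl⟩ hxa hay
    obtain ⟨w, -, -, haw⟩ := hstep a hxa hay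
    exact ⟨emb w, ⟨w, rfl⟩, hcov _ _ haw⟩
  refine ⟨hxy, fun z hxz hzy => ?_⟩
  obtain ⟨a, rfl⟩ := hcover ⟨hxz, hzy.le⟩
  obtain ⟨w, hw⟩ := hstep a hxz hzy
  exact ⟨emb w, hw⟩

end Embedding

theorem statement_6_general (A B : Type) [(sig 1).Structure A] [(sig 1).Structure B]
    [Finite B]
    (hOB : IsOrderedLe (leSym 1) B)
    (emb : A ↪[sig 1] B)
    (h : SomeTotalRSem 1 (interpOf 1 A)) :
    SomeTotalRSem 1 (interpOf 1 B) := by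
  rw [someTotalRSem_one_iff] at h ⊢
  by_cases hsucc : (interpOf 1 B).PartialSucc
  · rcases h with hA | ⟨x, y, hR, hxy⟩
    · exact absurd (hsucc.of_embedding emb) hA
    · exact .inr ⟨emb x, emb y, (interpOf_R_embedding emb x y).2 hR,
        hxy.map_embedding emb hOB hsucc⟩
  · exact .inl hsucc

/-- the class of finite ordered σ₁-structures satisfying `SomeTotalR_1` is
closed under extensions within finite ordered structures. -/
theorem statement_6 (A B : Type) [(sig 1).Structure A] [(sig 1).Structure B]
    [Finite A] [Finite B]
    (hOA : IsOrderedLe (leSym 1) A) (hOB : IsOrderedLe (leSym 1) B)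
    (emb : A ↪[sig 1] B)
    (h : SomeTotalRSem 1 (interpOf 1 A)) :
    SomeTotalRSem 1 (interpOf 1 B) :=
  statement_6_general A B hOB emb h

end Paper
end

section
/- For every n ≥ 1, the sentence SomeTotalR_n is logically equivalent to a Σ_{2n+1} sentence. -/
open FirstOrder Language

namespace Paper

variable {L : FirstOrder.Language} {α : Type*}

variable {A : Type*}

/-!
`SomeTotalR_1` is `¬PartialSucc ∨ ∃x∃y (R(x,y) ∧ ∀z∃w …)`, a Σ₃ sentence, and in general
`¬PartialSucc_n` is an existential statement about `Succ_n`, while `Total_n(x,y)` is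
`∀z ∃w (… ∧ Succ_n(z,w))`. Since `Succ_n` contains `SomeTotalR_{n-1}^{[x,y]}`, which is Σ_{2n-1} by
induction, `¬PartialSucc_n` is Σ_{2n-1} and the second disjunct is Σ_{2n+1}.

To obtain a single prenex sentence, the blocks of a nested prenex formula are merged with the outer
blocks of the same polarity: the variables of every block are split into three interleaved tracks,
track 0 carrying the variables of the current level and tracks 1 and 2 the nested prenex forms of
the two disjuncts. The disjunction of the two prefixes can then be pulled inside, since on
universal blocks the disjuncts read disjoint variables and `∀u (φ(u₁) ∨ ψ(u₂)) ↔ ∀u φ ∨ ∀u ψ`.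
-/

namespace SomeTotalRPrenex

def Quant {α : Type*} : Bool → (α → Prop) → Prop
  | true, p => ∃ a, p a
  | false, p => ∀ a, p a

section Quant

variable {α β : Type*} {b : Bool} {p q : α → Prop}

theorem Quant.mono (h : ∀ a, p a → q a) : Quant b p → Quant b q := by
  cases b
  exacts [fun hp a => h a (hp a), fun ⟨a, ha⟩ => ⟨a, h a ha⟩]

theorem Quant.congr (h : ∀ a, p a ↔ q a) : Quant b p ↔ Quant b q :=
  ⟨Quant.mono fun a => (h a).1, Quant.mono fun a => (h a).2⟩

theorem Quant.exists [Nonempty α] : Quant b p → ∃ a, p a := by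
  cases b
  exacts [fun h => ⟨Classical.arbitrary α, h _⟩, id]

theorem Quant.of_forall [Nonempty α] (h : ∀ a, p a) : Quant b p := by
  cases b
  exacts [h, ⟨Classical.arbitrary α, h _⟩]

theorem quant_comp_of_surjective {g : β → α} (hg : g.Surjective) :
    Quant b (fun c => p (g c)) ↔ Quant b p := by
  cases b
  exacts [hg.forall.symm, hg.exists.symm]

end Quant

variable {M : Type*}

def gridCons (ys : ℕ → M) (f : ℕ → ℕ → M) : ℕ → ℕ → M
  | 0 => ys
  | i + 1 => f i

def track {α : Type*} (c : ℕ) (f : ℕ → ℕ → α) : ℕ → ℕ → α := fun i t => f i (3 * t + c)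

/-- `r` alternating quantifier blocks, the first one existential iff `b`, in front of `P`; each
block binds a whole sequence, so that `f i t` is the `t`-th variable of block `i`. Blocks beyond
the `r`-th are set to an arbitrary constant. -/
noncomputable def BlockQuant [Nonempty M] : ℕ → Bool → ((ℕ → ℕ → M) → Prop) → Prop
  | 0, _, P => P fun _ _ => Classical.arbitrary M
  | r + 1, b, P => Quant b fun ys => BlockQuant r (!b) fun f => P (gridCons ys f)

def DependsOn (P : (ℕ → ℕ → M) → Prop) (Z : ℕ → ℕ → Prop) : Prop :=
  ∀ f g, (∀ i t, Z i t → f i t = g i t) → (P f ↔ P g)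

section DependsOn

variable {P : (ℕ → ℕ → M) → Prop} {Z : ℕ → ℕ → Prop}

theorem DependsOn.mono {Z' : ℕ → ℕ → Prop} (h : DependsOn P Z) (hZ : ∀ i t, Z i t → Z' i t) :
    DependsOn P Z' :=
  fun f g hfg => h f g fun i t hi => hfg i t (hZ i t hi)

theorem dependsOn_true (P : (ℕ → ℕ → M) → Prop) : DependsOn P fun _ _ => True :=
  fun f g h => by rw [show f = g from funext₂ fun i t => h i t trivial]

theorem DependsOn.comp_gridCons (h : DependsOn P Z) (ys : ℕ → M) :
    DependsOn (fun f => P (gridCons ys f)) fun i t => Z (i + 1) t :=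
  fun f g hfg => h _ _ fun i t hi => by cases i <;> simp_all [SomeTotalRPrenex.gridCons]

theorem DependsOn.gridCons_congr (h : DependsOn P Z) {ys ys' : ℕ → M}
    (hys : ∀ t, Z 0 t → ys t = ys' t) (f : ℕ → ℕ → M) :
    P (gridCons ys f) ↔ P (gridCons ys' f) :=
  h _ _ fun i t hi => by cases i <;> simp_all [SomeTotalRPrenex.gridCons]

end DependsOn

theorem gridCons_comp (τ : ℕ → ℕ) (ys : ℕ → M) (f : ℕ → ℕ → M) :
    (fun i t => gridCons ys f i (τ t)) = gridCons (fun t => ys (τ t)) fun i t => f i (τ t) := by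
  funext i
  cases i <;> rfl

theorem track_gridCons (c : ℕ) (ys : ℕ → M) (f : ℕ → ℕ → M) :
    track c (gridCons ys f) = gridCons (fun t => ys (3 * t + c)) (track c f) := by
  funext i
  cases i <;> rfl

theorem exists_interleave {c : ℕ} (hc : 0 < c ∧ c < 3) {p : (ℕ → M) → (ℕ → M) → Prop} :
    (∃ ys : ℕ → M, p (fun t => ys (3 * t)) (fun t => ys (3 * t + c))) ↔ ∃ a w, p a w := by
  refine ⟨fun ⟨ys, h⟩ => ⟨_, _, h⟩, fun ⟨a, w, h⟩ =>
    ⟨fun s => if s % 3 = 0 then a (s / 3) else w (s / 3), ?_⟩⟩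
  have ha : (fun t => if 3 * t % 3 = 0 then a (3 * t / 3) else w (3 * t / 3)) = a :=
    funext fun t => by rw [if_pos (by omega), show 3 * t / 3 = t by omega]
  have hw : (fun t => if (3 * t + c) % 3 = 0 then a ((3 * t + c) / 3) else w ((3 * t + c) / 3))
      = w :=
    funext fun t => by rw [if_neg (by omega), show (3 * t + c) / 3 = t by omega]
  simp only
  rwa [ha, hw]

section BlockQuant

variable [Nonempty M] {r : ℕ} {b : Bool} {P Q : (ℕ → ℕ → M) → Prop}

theorem BlockQuant.mono (h : ∀ f, P f → Q f) : BlockQuant r b P → BlockQuant r b Q := by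
  induction r generalizing b P Q with
  | zero => exact h _
  | succ r ih => exact Quant.mono fun ys => ih fun f => h _

theorem BlockQuant.congr (h : ∀ f, P f ↔ Q f) : BlockQuant r b P ↔ BlockQuant r b Q :=
  ⟨BlockQuant.mono fun f => (h f).1, BlockQuant.mono fun f => (h f).2⟩

theorem BlockQuant.exists : BlockQuant r b P → ∃ f, P f := by
  induction r generalizing b P with
  | zero => exact fun h => ⟨_, h⟩
  | succ r ih =>
    intro h
    obtain ⟨ys, hys⟩ := h.exists
    obtain ⟨f, hf⟩ := ih hys
    exact ⟨_, hf⟩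

theorem BlockQuant.of_forall (h : ∀ f, P f) : BlockQuant r b P := by
  induction r generalizing b P with
  | zero => exact h _
  | succ r ih => exact Quant.of_forall fun ys => ih fun f => h _

theorem blockQuant_const {C : Prop} : BlockQuant (M := M) r b (fun _ => C) ↔ C :=
  ⟨fun h => h.exists.elim fun _ => id, fun hC => .of_forall fun _ => hC⟩

theorem blockQuant_const_and {C : Prop} :
    BlockQuant r b (fun f => C ∧ P f) ↔ C ∧ BlockQuant r b P :=
  ⟨fun h => ⟨h.exists.elim fun _ hf => hf.1, h.mono fun _ => And.right⟩,
    fun ⟨hC, h⟩ => h.mono fun _ => And.intro hC⟩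

theorem blockQuant_const_imp {C : Prop} :
    BlockQuant r b (fun f => C → P f) ↔ (C → BlockQuant r b P) := by
  refine ⟨fun h hC => h.mono fun _ hf => hf hC, fun h => ?_⟩
  by_cases hC : C
  · exact (h hC).mono fun _ hf _ => hf
  · exact .of_forall fun _ hC' => absurd hC' hC

theorem blockQuant_add_of_dependsOn (e : ℕ) (hP : DependsOn P fun i _ => i < r) :
    BlockQuant (r + e) b P ↔ BlockQuant r b P := by
  induction r generalizing b P with
  | zero =>
    rw [Nat.zero_add]
    exact (BlockQuant.congr fun f => hP _ _ fun i _ hi => absurd hi i.not_lt_zero).trans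
      blockQuant_const
  | succ r ih =>
    rw [Nat.add_right_comm]
    exact Quant.congr fun ys => ih <| (hP.comp_gridCons ys).mono fun i _ => Nat.lt_of_succ_lt_succ

theorem blockQuant_comp_of_injective {τ : ℕ → ℕ} (hτ : τ.Injective) :
    BlockQuant r b (fun f => P fun i t => f i (τ t)) ↔ BlockQuant r b P := by
  induction r generalizing b P with
  | zero => rfl
  | succ r ih =>
    refine (Quant.congr fun ys => ?_).trans
      (quant_comp_of_surjective (p := fun ys => BlockQuant r (!b) fun f => P (gridCons ys f))
        hτ.surjective_comp_right)
    simp only [gridCons_comp]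
    exact ih (P := fun g => P (gridCons (fun t => ys (τ t)) g))

theorem blockQuant_succ_interleave {c : ℕ} (hc : 0 < c ∧ c < 3) {Outer : (ℕ → M) → Prop}
    {Inner : (ℕ → M) → (ℕ → ℕ → M) → Prop}
    (hP : ∀ f, P f ↔ Outer (fun t => f 0 (3 * t)) ∧ Inner (fun t => f 0 (3 * t)) (track c f)) :
    BlockQuant (r + 1) true P ↔ ∃ a, Outer a ∧ BlockQuant (r + 1) true (Inner a) := by
  have hτ : Function.Injective fun t => 3 * t + c := fun s t h => by simp only at h; omega
  calc BlockQuant (r + 1) true P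
      ↔ ∃ ys : ℕ → M, Outer (fun t => ys (3 * t)) ∧ BlockQuant r false fun g =>
          Inner (fun t => ys (3 * t)) (gridCons (fun t => ys (3 * t + c)) g) := by
        refine exists_congr fun ys => ?_
        have e (g : ℕ → ℕ → M) : P (gridCons ys g) ↔ Outer (fun t => ys (3 * t)) ∧
            Inner (fun t => ys (3 * t)) (gridCons (fun t => ys (3 * t + c)) (track c g)) := by
          rw [hP, track_gridCons]
          rfl
        rw [BlockQuant.congr e, blockQuant_const_and]
        exact and_congr_right' (blockQuant_comp_of_injective hτ
          (P := fun g => Inner (fun t => ys (3 * t)) (gridCons (fun t => ys (3 * t + c)) g)))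
    _ ↔ ∃ a w, Outer a ∧ BlockQuant r false fun g => Inner a (gridCons w g) :=
        exists_interleave hc (p := fun a w => Outer a ∧ BlockQuant r false fun g =>
          Inner a (gridCons w g))
    _ ↔ ∃ a, Outer a ∧ BlockQuant (r + 1) true (Inner a) :=
        exists_congr fun _ => exists_and_left

theorem blockQuant_exists_forall_imp {C : (ℕ → M) → Prop} {C' : (ℕ → M) → M → Prop}
    {Q : (ℕ → M) → M → (ℕ → ℕ → M) → Prop}
    (hP : ∀ f, P f ↔ C (f 0) ∧ (C' (f 0) (f 1 0) → Q (f 0) (f 1 0) fun i => f (i + 2))) :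
    BlockQuant (r + 2) true P ↔ ∃ ys, C ys ∧ ∀ z, C' ys z → BlockQuant r true (Q ys z) := by
  refine exists_congr fun ys => ?_
  have e (ys' : ℕ → M) (g : ℕ → ℕ → M) :
      P (gridCons ys (gridCons ys' g)) ↔ C ys ∧ (C' ys (ys' 0) → Q ys (ys' 0) g) :=
    hP _
  change (∀ ys', BlockQuant r true fun g => P (gridCons ys (gridCons ys' g))) ↔ _
  simp only [e, blockQuant_const_and, blockQuant_const_imp]
  exact ⟨fun h => ⟨(h fun _ => Classical.arbitrary M).1, fun z => (h fun _ => z).2⟩,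
    fun h ys' => ⟨h.1, h.2 (ys' 0)⟩⟩

/-- A universal block distributes over a disjunction whose disjuncts read disjoint parts of it:
given a block `ys₁` refuting the first disjunct, any `ys₂` is patched with `ys₁` on `Z₁`. -/
theorem blockQuant_or {Z₁ Z₂ : ℕ → ℕ → Prop} (h₁ : DependsOn P Z₁) (h₂ : DependsOn Q Z₂)
    (hZ : ∀ i t, Z₁ i t → Z₂ i t → (Even i ↔ b)) :
    BlockQuant r b (fun f => P f ∨ Q f) ↔ BlockQuant r b P ∨ BlockQuant r b Q := by
  induction r generalizing b P Q Z₁ Z₂ with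
  | zero => rfl
  | succ r ih =>
    have step (ys : ℕ → M) :=
      ih (b := !b) (h₁.comp_gridCons ys) (h₂.comp_gridCons ys) fun i t hi₁ hi₂ => by
        have := hZ (i + 1) t hi₁ hi₂
        rw [Nat.even_add_one] at this
        cases b <;> simp_all
    cases b
    · refine ⟨fun h => or_iff_not_imp_left.2 fun hP ys₂ => ?_, fun h ys => (step ys).2 ?_⟩
      · obtain ⟨ys₁, hys₁⟩ := not_forall.1 hP
        classical
        let ys t := if Z₁ 0 t then ys₁ t else ys₂ t
        have e₁ := BlockQuant.congr (r := r) (b := true)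
          (h₁.gridCons_congr (ys := ys) (ys' := ys₁) fun t ht => if_pos ht)
        have e₂ := BlockQuant.congr (r := r) (b := true)
          (h₂.gridCons_congr (ys := ys) (ys' := ys₂) fun t ht =>
            if_neg fun ht₁ => by simpa using hZ 0 t ht₁ ht)
        exact e₂.1 (((step ys).1 (h ys)).resolve_left (e₁.not.2 hys₁))
      · exact h.imp (· ys) (· ys)
    · exact (exists_congr step).trans exists_or

end BlockQuant

section Prefix

variable [L.Structure A] {v : α → A}

theorem realize_exN {m : ℕ} (j : ℕ) (φ : L.BoundedFormula α (m + j)) (xs : Fin m → A) :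
    (exN j φ).Realize v xs ↔ ∃ ys : Fin j → A, φ.Realize v (Fin.append xs ys) := by
  induction j with
  | zero => simp [exN, Fin.append_right_nil _ _ rfl]
  | succ j ih =>
    rw [exN, ih]
    simp only [BoundedFormula.realize_ex, ← Fin.append_snoc]
    exact ⟨fun ⟨_, _, h⟩ => ⟨_, h⟩, fun ⟨ys, h⟩ =>
      ⟨Fin.init ys, ys (Fin.last j), by rwa [Fin.snoc_init_self]⟩⟩

theorem realize_allN {m : ℕ} (j : ℕ) (φ : L.BoundedFormula α (m + j)) (xs : Fin m → A) :
    (allN j φ).Realize v xs ↔ ∀ ys : Fin j → A, φ.Realize v (Fin.append xs ys) := by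
  induction j with
  | zero => simp [allN, Fin.append_right_nil _ _ rfl]
  | succ j ih =>
    rw [allN, ih]
    simp only [BoundedFormula.realize_all, ← Fin.append_snoc]
    exact ⟨fun h ys => by simpa [Fin.snoc_init_self] using h (Fin.init ys) (ys (Fin.last j)),
      fun h _ _ => h _⟩

theorem realize_quantN {m : ℕ} (b : Bool) (j : ℕ) (φ : L.BoundedFormula α (m + j))
    (xs : Fin m → A) :
    (if b then exN j φ else allN j φ).Realize v xs ↔
      Quant b fun ys : Fin j → A => φ.Realize v (Fin.append xs ys) := by
  cases b
  exacts [realize_allN j φ xs, realize_exN j φ xs]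

/-- Recursive, rather than `ℓ + r * s`, so that `blockPrefix` typechecks without casts. -/
def prefixCtx : ℕ → ℕ → ℕ → ℕ
  | 0, _, ℓ => ℓ
  | r + 1, s, ℓ => prefixCtx r s (ℓ + s)

theorem prefixCtx_eq (r s ℓ : ℕ) : prefixCtx r s ℓ = ℓ + r * s := by
  induction r generalizing ℓ with
  | zero => simp [prefixCtx]
  | succ r ih => rw [prefixCtx, ih]; ring

def blockPrefix : (r : ℕ) → Bool → (s ℓ : ℕ) → L.BoundedFormula α (prefixCtx r s ℓ) →
    L.BoundedFormula α ℓ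
  | 0, _, _, _, φ => φ
  | r + 1, b, s, ℓ, φ =>
    if b then exN s (blockPrefix r (!b) s (ℓ + s) φ) else allN s (blockPrefix r (!b) s (ℓ + s) φ)

theorem isSigmaPi_blockPrefix {k s : ℕ} (hs : s ≤ k) (r : ℕ) (b : Bool) (ℓ : ℕ)
    {φ : L.BoundedFormula α (prefixCtx r s ℓ)} (hφ : φ.IsQF) :
    IsSigmaPi k b r ℓ (blockPrefix r b s ℓ φ) := by
  induction r generalizing b ℓ with
  | zero => exact hφ
  | succ r ih => exact Or.inr ⟨s, hs, _, ih (!b) (ℓ + s) hφ, rfl⟩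

def gridAppend (s ℓ : ℕ) (xs : Fin ℓ → A) (f : ℕ → ℕ → A) (p : ℕ) : A :=
  if h : p < ℓ then xs ⟨p, h⟩ else f ((p - ℓ) / s) ((p - ℓ) % s)

theorem gridAppend_gridCons {s ℓ : ℕ} (hs : 0 < s) (xs : Fin ℓ → A) (ys : ℕ → A)
    (f : ℕ → ℕ → A) :
    gridAppend s ℓ xs (gridCons ys f) = gridAppend s (ℓ + s) (Fin.append xs fun t => ys t) f := by
  funext p
  simp only [gridAppend]
  by_cases h₁ : p < ℓ
  · rw [dif_pos h₁, dif_pos (by omega)]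
    exact (Fin.append_left xs _ ⟨p, h₁⟩).symm
  by_cases h₂ : p < ℓ + s
  · rw [dif_neg h₁, dif_pos h₂, Nat.div_eq_of_lt (by omega), Nat.mod_eq_of_lt (by omega)]
    exact (Fin.append_right xs (fun t : Fin s => ys t) ⟨p - ℓ, by omega⟩).symm.trans
      (congrArg _ (Fin.ext (by simp; omega)))
  · obtain ⟨q, rfl⟩ : ∃ q, p = ℓ + s + q := ⟨p - (ℓ + s), by omega⟩
    rw [dif_neg h₁, dif_neg h₂, show ℓ + s + q - ℓ = q + s * 1 by omega,
      Nat.add_mul_div_left _ _ hs, Nat.add_mul_mod_self_left, Nat.add_sub_cancel_left]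
    rfl

theorem realize_blockPrefix [Nonempty A] {s : ℕ} (hs : 0 < s) (r : ℕ) (b : Bool) (ℓ : ℕ)
    (φ : L.BoundedFormula α (prefixCtx r s ℓ)) (xs : Fin ℓ → A) :
    (blockPrefix r b s ℓ φ).Realize v xs ↔
      BlockQuant r b fun f => φ.Realize v fun p => gridAppend s ℓ xs f p := by
  induction r generalizing b ℓ with
  | zero =>
    refine Iff.of_eq (congrArg _ (funext fun p => ?_))
    simp [gridAppend]
  | succ r ih =>
    rw [blockPrefix, realize_quantN]
    refine (Quant.congr fun ys => ih _ _ _ _).trans ?_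
    refine (quant_comp_of_surjective (g := fun (ys : ℕ → A) (t : Fin s) => ys t)
      Fin.val_injective.surjective_comp_right).symm.trans ?_
    rw [BlockQuant]
    simp only [gridAppend_gridCons hs]
    rfl

end Prefix

section Matrix

variable (I : Interp M)

/-- `Succ_{m+2}(x, y)` relativized to `D`, with `T` in place of `SomeTotalR_{m+1}^{[x,y]}`. -/
def SuccWith (m : ℕ) (T : (M → Prop) → Prop) (D : M → Prop) (x y : M) : Prop :=
  I.Pn (m + 2) x ∧ I.Pn (m + 2) y ∧ I.Sn (m + 2) x y ∧
    (I.le x y ∧ T fun z => D z ∧ I.le x z ∧ I.le z y)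

def NotPartialSuccMat₀ (D : M → Prop) (f : ℕ → ℕ → M) : Prop :=
  D (f 0 0) ∧ D (f 0 1) ∧ I.S (f 0 0) (f 0 1) ∧
    (¬I.lt (f 0 0) (f 0 1) ∨ D (f 0 2) ∧ I.lt (f 0 0) (f 0 2) ∧ I.lt (f 0 2) (f 0 1))

def TotalMat₀ (D : M → Prop) (f : ℕ → ℕ → M) : Prop :=
  (D (f 0 3) ∧ D (f 0 4) ∧ I.R (f 0 3) (f 0 4) ∧ I.lt (f 0 3) (f 0 4)) ∧
    (D (f 1 0) ∧ I.le (f 0 3) (f 1 0) ∧ I.lt (f 1 0) (f 0 4) →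
      D (f 2 0) ∧ I.lt (f 1 0) (f 2 0) ∧ I.le (f 2 0) (f 0 4) ∧ I.S (f 1 0) (f 2 0))

def NotPartialSuccMat (m : ℕ) (Mat : (M → Prop) → (ℕ → ℕ → M) → Prop) (D : M → Prop)
    (f : ℕ → ℕ → M) : Prop :=
  (D (f 0 0) ∧ D (f 0 3) ∧ D (f 0 6) ∧ I.Pn (m + 2) (f 0 6) ∧ ¬I.le (f 0 6) (f 0 0) ∧
      ¬I.le (f 0 3) (f 0 6)) ∧
    SuccWith I m (fun D' => Mat D' (track 1 f)) D (f 0 0) (f 0 3)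

def TotalMat (m : ℕ) (Mat : (M → Prop) → (ℕ → ℕ → M) → Prop) (D : M → Prop)
    (f : ℕ → ℕ → M) : Prop :=
  (D (f 0 9) ∧ D (f 0 12) ∧ I.Rn (m + 2) (f 0 9) (f 0 12) ∧ I.lt (f 0 9) (f 0 12)) ∧
    (D (f 1 0) ∧ I.Pn (m + 2) (f 1 0) ∧ I.le (f 0 9) (f 1 0) ∧ I.lt (f 1 0) (f 0 12) →
      (D (f 2 0) ∧ I.lt (f 1 0) (f 2 0) ∧ I.le (f 2 0) (f 0 12)) ∧
        SuccWith I m (fun D' => Mat D' (track 2 fun i => f (i + 2))) D (f 1 0) (f 2 0))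

/-- The quantifier-free matrix of the prenex form of `SomeTotalR_{m+1}` relativized to `D`, on the
grid `f` of its `2m + 3` quantifier blocks. The variables of the level itself sit on track `0`
(entries `0, 3, 6, …`) of blocks `0`, `1`, `2`; the matrix inside `¬PartialSucc` reads track `1`
of all blocks, the one inside `Total` track `2` of the blocks from `2` on. -/
def SomeTotalMat : ℕ → (M → Prop) → (ℕ → ℕ → M) → Prop
  | 0, D, f => NotPartialSuccMat₀ I D f ∨ TotalMat₀ I D f
  | m + 1, D, f => NotPartialSuccMat I m (SomeTotalMat m) D f ∨ TotalMat I m (SomeTotalMat m) D f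

theorem notPartialSuccMat₀_dependsOn (D : M → Prop) :
    DependsOn (NotPartialSuccMat₀ I D) fun i _ => i = 0 := by
  intro f g h
  simp only [NotPartialSuccMat₀, show f 0 = g 0 from funext (h 0 · rfl)]

theorem notPartialSuccMat_dependsOn (m : ℕ) (Mat : (M → Prop) → (ℕ → ℕ → M) → Prop)
    (D : M → Prop) : DependsOn (NotPartialSuccMat I m Mat D) fun i t => i = 0 ∨ t % 3 = 1 := by
  intro f g h
  have h₀ : f 0 = g 0 := funext fun t => h 0 t (Or.inl rfl)
  have h₁ : track 1 f = track 1 g := funext₂ fun i t => h i _ (Or.inr (by omega))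
  simp only [NotPartialSuccMat, h₀, h₁]

theorem totalMat_dependsOn (m : ℕ) (Mat : (M → Prop) → (ℕ → ℕ → M) → Prop) (D : M → Prop) :
    DependsOn (TotalMat I m Mat D) fun _ t => t % 3 ≠ 1 := by
  intro f g h
  have h₂ : (track 2 fun i => f (i + 2)) = track 2 fun i => g (i + 2) :=
    funext₂ fun i t => h _ _ (by omega)
  simp (disch := omega) only [TotalMat, h₂, h]

def blockSize : ℕ → ℕ
  | 0 => 5
  | m + 1 => 3 * blockSize m + 13

theorem someTotalMat_dependsOn (m : ℕ) (D : M → Prop) :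
    DependsOn (SomeTotalMat I m D) fun i t => i < 2 * m + 3 ∧ t < blockSize m := by
  induction m generalizing D with
  | zero =>
    intro f g h
    simp (disch := simp [blockSize]) only [SomeTotalMat, NotPartialSuccMat₀, TotalMat₀, h]
  | succ m ih =>
    intro f g h
    have h₁ (D' : M → Prop) : SomeTotalMat I m D' (track 1 f) ↔ SomeTotalMat I m D' (track 1 g) :=
      ih D' _ _ fun i t ⟨hi, ht⟩ => h i _ ⟨by omega, by simp only [blockSize]; omega⟩
    have h₂ (D' : M → Prop) : SomeTotalMat I m D' (track 2 fun i => f (i + 2)) ↔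
        SomeTotalMat I m D' (track 2 fun i => g (i + 2)) :=
      ih D' _ _ fun i t ⟨hi, ht⟩ => h _ _ ⟨by omega, by simp only [blockSize]; omega⟩
    simp (disch := simp [blockSize]) only [SomeTotalMat, NotPartialSuccMat, TotalMat, h₁, h₂, h]

end Matrix

section Levels

variable (I : Interp M) [Nonempty M]

theorem blockQuant_notPartialSuccMat₀ (D : M → Prop) :
    BlockQuant 3 true (NotPartialSuccMat₀ I D) ↔
      ¬∀ x y, D x → D y → I.S x y → (I.lt x y ∧ ∀ z, D z → ¬(I.lt x z ∧ I.lt z y)) := by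
  rw [blockQuant_add_of_dependsOn (r := 1) 2
    ((notPartialSuccMat₀_dependsOn I D).mono fun i _ hi => by omega)]
  constructor
  · rintro ⟨ys, hx, hy, hS, h⟩ hall
    obtain ⟨hlt, hz⟩ := hall _ _ hx hy hS
    rcases h with h | ⟨hz', h₁, h₂⟩
    exacts [h hlt, hz _ hz' ⟨h₁, h₂⟩]
  · intro h
    push Not at h
    obtain ⟨x, y, hx, hy, hS, h⟩ := h
    by_cases hlt : I.lt x y
    · obtain ⟨z, hz⟩ := h hlt
      exact ⟨fun t => if t = 0 then x else if t = 1 then y else z, hx, hy, hS, Or.inr hz⟩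
    · exact ⟨fun t => if t = 0 then x else y, hx, hy, hS, Or.inl hlt⟩

theorem blockQuant_totalMat₀ (D : M → Prop) :
    BlockQuant 3 true (TotalMat₀ I D) ↔
      ∃ x y, D x ∧ D y ∧ I.R x y ∧ (I.lt x y ∧ ∀ z, D z → I.le x z → I.lt z y →
        ∃ w, D w ∧ I.lt z w ∧ I.le w y ∧ I.S z w) := by
  simp only [BlockQuant, Bool.not_true, Bool.not_false, Quant, TotalMat₀, gridCons]
  constructor
  · rintro ⟨ys, h⟩
    obtain ⟨_, ⟨hx, hy, hR, hlt⟩, -⟩ := h fun _ => Classical.arbitrary M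
    refine ⟨ys 3, ys 4, hx, hy, hR, hlt, fun z hz h₁ h₂ => ?_⟩
    obtain ⟨w, -, hw⟩ := h fun _ => z
    exact ⟨w 0, hw ⟨hz, h₁, h₂⟩⟩
  · rintro ⟨x, y, hx, hy, hR, hlt, h⟩
    refine ⟨fun t => if t = 3 then x else y, fun z => ?_⟩
    by_cases hz : D (z 0) ∧ I.le x (z 0) ∧ I.lt (z 0) y
    · obtain ⟨w, hw⟩ := h _ hz.1 hz.2.1 hz.2.2
      exact ⟨fun _ => w, ⟨hx, hy, hR, hlt⟩, fun _ => hw⟩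
    · exact ⟨fun _ => Classical.arbitrary M, ⟨hx, hy, hR, hlt⟩, fun h' => absurd h' hz⟩

section Succ

variable {I} {m : ℕ} (ih : ∀ D, BlockQuant (2 * m + 3) true (SomeTotalMat I m D) ↔ STR I m D)
include ih

theorem blockQuant_succWith (e : ℕ) (D : M → Prop) (x y : M) :
    BlockQuant (2 * m + 3 + e) true (fun g => SuccWith I m (fun D' => SomeTotalMat I m D' g) D x y)
      ↔ SuccWith I m (STR I m) D x y := by
  simp only [SuccWith, blockQuant_const_and]
  rw [blockQuant_add_of_dependsOn e ((someTotalMat_dependsOn I m _).mono fun _ _ => And.left), ih]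

theorem blockQuant_notPartialSuccMat (D : M → Prop) :
    BlockQuant (2 * m + 5) true (NotPartialSuccMat I m (SomeTotalMat I m) D) ↔
      ¬∀ x y, D x → D y → SuccWith I m (STR I m) D x y →
        ∀ z, D z → I.Pn (m + 2) z → I.le z x ∨ I.le y z := by
  refine (blockQuant_succ_interleave (r := 2 * m + 4) (c := 1) (by norm_num)
    (P := NotPartialSuccMat I m (SomeTotalMat I m) D)
    (Outer := fun a => D (a 0) ∧ D (a 1) ∧ D (a 2) ∧ I.Pn (m + 2) (a 2) ∧ ¬I.le (a 2) (a 0) ∧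
      ¬I.le (a 1) (a 2))
    (Inner := fun a g => SuccWith I m (fun D' => SomeTotalMat I m D' g) D (a 0) (a 1))
    fun _ => Iff.rfl).trans ((exists_congr fun a : ℕ → M =>
      and_congr_right' (blockQuant_succWith ih 2 D (a 0) (a 1))).trans ?_)
  constructor
  · rintro ⟨a, ⟨hx, hy, hz, hPz, h₁, h₂⟩, hs⟩ h
    exact (h _ _ hx hy hs _ hz hPz).elim h₁ h₂
  · intro h
    push Not at h
    obtain ⟨x, y, hx, hy, hs, z, hz, hPz, h₁, h₂⟩ := h
    exact ⟨fun t => if t = 0 then x else if t = 1 then y else z, ⟨hx, hy, hz, hPz, h₁, h₂⟩, hs⟩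

theorem blockQuant_totalMat (D : M → Prop) :
    BlockQuant (2 * m + 5) true (TotalMat I m (SomeTotalMat I m) D) ↔
      ∃ x y, D x ∧ D y ∧ I.Rn (m + 2) x y ∧ (I.lt x y ∧ ∀ z, D z → I.Pn (m + 2) z → I.le x z →
        I.lt z y → ∃ w, D w ∧ I.lt z w ∧ I.le w y ∧ SuccWith I m (STR I m) D z w) := by
  have step (ys : ℕ → M) (z : M) :
      (BlockQuant (2 * m + 3) true fun g => (D (g 0 0) ∧ I.lt z (g 0 0) ∧ I.le (g 0 0) (ys 12)) ∧
        SuccWith I m (fun D' => SomeTotalMat I m D' (track 2 g)) D z (g 0 0)) ↔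
      ∃ w, (D w ∧ I.lt z w ∧ I.le w (ys 12)) ∧ SuccWith I m (STR I m) D z w := by
    refine (blockQuant_succ_interleave (r := 2 * m + 2) (c := 2) (by norm_num)
      (Outer := fun a => D (a 0) ∧ I.lt z (a 0) ∧ I.le (a 0) (ys 12))
      (Inner := fun a g => SuccWith I m (fun D' => SomeTotalMat I m D' g) D z (a 0))
      fun _ => Iff.rfl).trans ?_
    simp only [blockQuant_succWith ih 0]
    exact ⟨fun ⟨a, h⟩ => ⟨a 0, h⟩, fun ⟨w, h⟩ => ⟨fun _ => w, h⟩⟩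
  refine (blockQuant_exists_forall_imp (r := 2 * m + 3) (P := TotalMat I m (SomeTotalMat I m) D)
    (C := fun ys => D (ys 9) ∧ D (ys 12) ∧ I.Rn (m + 2) (ys 9) (ys 12) ∧ I.lt (ys 9) (ys 12))
    (C' := fun ys z => D z ∧ I.Pn (m + 2) z ∧ I.le (ys 9) z ∧ I.lt z (ys 12))
    (Q := fun ys z g => (D (g 0 0) ∧ I.lt z (g 0 0) ∧ I.le (g 0 0) (ys 12)) ∧
      SuccWith I m (fun D' => SomeTotalMat I m D' (track 2 g)) D z (g 0 0))
    fun _ => Iff.rfl).trans ?_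
  simp only [step]
  constructor
  · rintro ⟨ys, ⟨hx, hy, hR, hlt⟩, h⟩
    exact ⟨ys 9, ys 12, hx, hy, hR, hlt, fun z hz hPz h₁ h₂ =>
      let ⟨w, ⟨hw, hzw, hwy⟩, hs⟩ := h z ⟨hz, hPz, h₁, h₂⟩; ⟨w, hw, hzw, hwy, hs⟩⟩
  · rintro ⟨x, y, hx, hy, hR, hlt, h⟩
    exact ⟨fun t => if t = 9 then x else y, ⟨hx, hy, hR, hlt⟩, fun z ⟨hz, hPz, h₁, h₂⟩ =>
      let ⟨w, hw, hzw, hwy, hs⟩ := h z hz hPz h₁ h₂; ⟨w, ⟨hw, hzw, hwy⟩, hs⟩⟩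

end Succ

theorem blockQuant_someTotalMat :
    ∀ m D, BlockQuant (2 * m + 3) true (SomeTotalMat I m D) ↔ STR I m D
  | 0, D =>
    (blockQuant_or (notPartialSuccMat₀_dependsOn I D) (dependsOn_true _)
      fun i _ hi _ => by simp [hi]).trans
      (or_congr (blockQuant_notPartialSuccMat₀ I D) (blockQuant_totalMat₀ I D))
  | m + 1, D =>
    (blockQuant_or (notPartialSuccMat_dependsOn I m _ D) (totalMat_dependsOn I m _ D)
      fun i t hi ht => by simp [show i = 0 by omega]).trans
      (or_congr (blockQuant_notPartialSuccMat (blockQuant_someTotalMat m) D)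
        (blockQuant_totalMat (blockQuant_someTotalMat m) D))

end Levels

section Formulas

variable {n N : ℕ}

def atom₁ (r : (sig n).Relations 1) (a : Fin N) : (sig n).BoundedFormula Empty N :=
  r.boundedFormula₁ &a

def atom₂ (r : (sig n).Relations 2) (a b : Fin N) : (sig n).BoundedFormula Empty N :=
  r.boundedFormula₂ &a &b

def ltF (a b : Fin N) : (sig n).BoundedFormula Empty N :=
  atom₂ (leSym n) a b ⊓ ∼((&a).bdEqual &b)

/-- The formula whose semantics is `SomeTotalMat`: `D u` relativizes to a domain, and
`pos i t` is the variable holding the `t`-th entry of the `i`-th quantifier block. -/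
def someTotalMatF (n : ℕ) : (m : ℕ) → m + 1 ≤ n → (Fin N → (sig n).BoundedFormula Empty N) →
    (ℕ → ℕ → Fin N) → (sig n).BoundedFormula Empty N
  | 0, _, D, v =>
    (D (v 0 0) ⊓ D (v 0 1) ⊓ atom₂ (sSym n) (v 0 0) (v 0 1) ⊓
        (∼(ltF (v 0 0) (v 0 1)) ⊔ D (v 0 2) ⊓ ltF (v 0 0) (v 0 2) ⊓ ltF (v 0 2) (v 0 1))) ⊔
      (D (v 0 3) ⊓ D (v 0 4) ⊓ atom₂ (rSym n) (v 0 3) (v 0 4) ⊓ ltF (v 0 3) (v 0 4) ⊓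
        (D (v 1 0) ⊓ atom₂ (leSym n) (v 0 3) (v 1 0) ⊓ ltF (v 1 0) (v 0 4) ⟹
          D (v 2 0) ⊓ ltF (v 1 0) (v 2 0) ⊓ atom₂ (leSym n) (v 2 0) (v 0 4) ⊓
            atom₂ (sSym n) (v 1 0) (v 2 0)))
  | m + 1, h, D, v =>
    let hi : 2 ≤ m + 2 ∧ m + 2 ≤ n := ⟨by omega, h⟩
    let le := atom₂ (N := N) (leSym n)
    let succF (x y : Fin N) (w : ℕ → ℕ → Fin N) :=
      atom₁ (pnSym n _ hi) x ⊓ atom₁ (pnSym n _ hi) y ⊓ atom₂ (snSym n _ hi) x y ⊓ le x y ⊓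
        someTotalMatF n m (by omega) (fun u => D u ⊓ le x u ⊓ le u y) w
    (D (v 0 0) ⊓ D (v 0 3) ⊓ D (v 0 6) ⊓ atom₁ (pnSym n _ hi) (v 0 6) ⊓
        ∼(le (v 0 6) (v 0 0)) ⊓ ∼(le (v 0 3) (v 0 6)) ⊓ succF (v 0 0) (v 0 3) (track 1 v)) ⊔
      (D (v 0 9) ⊓ D (v 0 12) ⊓ atom₂ (rnSym n _ hi) (v 0 9) (v 0 12) ⊓ ltF (v 0 9) (v 0 12) ⊓
        (D (v 1 0) ⊓ atom₁ (pnSym n _ hi) (v 1 0) ⊓ le (v 0 9) (v 1 0) ⊓ ltF (v 1 0) (v 0 12) ⟹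
          D (v 2 0) ⊓ ltF (v 1 0) (v 2 0) ⊓ le (v 2 0) (v 0 12) ⊓
            succF (v 1 0) (v 2 0) (track 2 fun i => v (i + 2))))

theorem isQF_someTotalMatF (m : ℕ) (h : m + 1 ≤ n) {D : Fin N → (sig n).BoundedFormula Empty N}
    (hD : ∀ u, (D u).IsQF) (pos : ℕ → ℕ → Fin N) : (someTotalMatF n m h D pos).IsQF := by
  induction m generalizing D pos with
  | zero =>
    repeat' first
      | exact hD _ | exact BoundedFormula.isQF_bot | exact (BoundedFormula.IsAtomic.rel _ _).isQF
      | exact (BoundedFormula.IsAtomic.equal _ _).isQF | apply BoundedFormula.IsQF.imp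
  | succ m ih =>
    have hsub (x y : Fin N) := ih (by omega)
      (D := fun u => D u ⊓ atom₂ (leSym n) x u ⊓ atom₂ (leSym n) u y)
      fun u => ((hD u).inf (BoundedFormula.IsAtomic.rel _ _).isQF).inf
        (BoundedFormula.IsAtomic.rel _ _).isQF
    repeat' first
      | exact hD _ | exact hsub _ _ _ | exact BoundedFormula.isQF_bot
      | exact (BoundedFormula.IsAtomic.rel _ _).isQF
      | exact (BoundedFormula.IsAtomic.equal _ _).isQF | apply BoundedFormula.IsQF.imp

variable [(sig n).Structure A] {v : Empty → A} {xs : Fin N → A}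

theorem realize_atom₁ {r : (sig n).Relations 1} {a : Fin N} :
    (atom₁ r a).Realize v xs ↔ Structure.RelMap r ![xs a] := by
  simp [atom₁]

theorem realize_atom₂ {r : (sig n).Relations 2} {a b : Fin N} :
    (atom₂ r a b).Realize v xs ↔ Structure.RelMap r ![xs a, xs b] := by
  simp [atom₂]

theorem realize_ltF {a b : Fin N} :
    (ltF (n := n) a b).Realize v xs ↔ (interpOf n A).lt (xs a) (xs b) := by
  simp [ltF, Interp.lt, realize_atom₂, interpOf]

theorem relMap_leSym {x y : A} : Structure.RelMap (leSym n) ![x, y] ↔ (interpOf n A).le x y :=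
  Iff.rfl

theorem relMap_sSym {x y : A} : Structure.RelMap (sSym n) ![x, y] ↔ (interpOf n A).S x y :=
  Iff.rfl

theorem relMap_rSym {x y : A} : Structure.RelMap (rSym n) ![x, y] ↔ (interpOf n A).R x y :=
  Iff.rfl

theorem relMap_pnSym {i : ℕ} {h : 2 ≤ i ∧ i ≤ n} {x : A} :
    Structure.RelMap (pnSym n i h) ![x] ↔ (interpOf n A).Pn i x :=
  ⟨fun hr => ⟨h, hr⟩, fun ⟨_, hr⟩ => hr⟩

theorem relMap_snSym {i : ℕ} {h : 2 ≤ i ∧ i ≤ n} {x y : A} :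
    Structure.RelMap (snSym n i h) ![x, y] ↔ (interpOf n A).Sn i x y :=
  ⟨fun hr => ⟨h, hr⟩, fun ⟨_, hr⟩ => hr⟩

theorem relMap_rnSym {i : ℕ} {h : 2 ≤ i ∧ i ≤ n} {x y : A} :
    Structure.RelMap (rnSym n i h) ![x, y] ↔ (interpOf n A).Rn i x y :=
  ⟨fun hr => ⟨h, hr⟩, fun ⟨_, hr⟩ => hr⟩

theorem realize_someTotalMatF (m : ℕ) (h : m + 1 ≤ n) (D : Fin N → (sig n).BoundedFormula Empty N)
    (Dsem : A → Prop) (hD : ∀ u, (D u).Realize v xs ↔ Dsem (xs u)) (pos : ℕ → ℕ → Fin N) :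
    (someTotalMatF n m h D pos).Realize v xs ↔
      SomeTotalMat (interpOf n A) m Dsem fun i t => xs (pos i t) := by
  induction m generalizing D Dsem pos with
  | zero =>
    simp only [someTotalMatF, SomeTotalMat, NotPartialSuccMat₀, TotalMat₀,
      BoundedFormula.realize_sup, BoundedFormula.realize_inf, BoundedFormula.realize_imp,
      BoundedFormula.realize_not, hD, realize_atom₂, realize_ltF, relMap_leSym, relMap_sSym,
      relMap_rSym, and_assoc]
  | succ m ih =>
    have hsub (x y : Fin N) :=
      ih (by omega) (fun u => D u ⊓ atom₂ (leSym n) x u ⊓ atom₂ (leSym n) u y)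
      (fun z => Dsem z ∧ (interpOf n A).le (xs x) z ∧ (interpOf n A).le z (xs y))
      fun u => by simp [hD, realize_atom₂, relMap_leSym, and_assoc]
    simp only [someTotalMatF, SomeTotalMat, NotPartialSuccMat, TotalMat, SuccWith, track,
      BoundedFormula.realize_sup, BoundedFormula.realize_inf, BoundedFormula.realize_imp,
      BoundedFormula.realize_not, hD, hsub, realize_atom₁, realize_atom₂, realize_ltF,
      relMap_leSym, relMap_pnSym, relMap_snSym, relMap_rnSym, and_assoc]
    rfl

end Formulas

theorem blockSize_pos (m : ℕ) : 0 < blockSize m := by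
  cases m <;> simp [blockSize]

/-- The variable holding entry `t` of block `i`, reduced modulo the size of the context, so
only meaningful for `i < r` and `t < s`. -/
def gridPos (r s : ℕ) (h : 0 < prefixCtx r s 0) (i t : ℕ) : Fin (prefixCtx r s 0) :=
  ⟨(s * i + t) % prefixCtx r s 0, Nat.mod_lt _ h⟩

theorem gridAppend_gridPos {r s : ℕ} (h : 0 < prefixCtx r s 0) (xs : Fin 0 → A)
    (f : ℕ → ℕ → A) {i t : ℕ} (hi : i < r) (ht : t < s) :
    gridAppend s 0 xs f (gridPos r s h i t) = f i t := by
  have hlt : s * i + t < prefixCtx r s 0 := by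
    rw [prefixCtx_eq, zero_add]
    nlinarith
  simp only [gridPos, gridAppend, Nat.mod_eq_of_lt hlt, Nat.not_lt_zero, dite_false, Nat.sub_zero,
    Nat.mul_add_div (by omega : 0 < s), Nat.mul_add_mod, Nat.div_eq_of_lt ht, Nat.mod_eq_of_lt ht,
    add_zero]

theorem prefixCtx_someTotal_pos (m : ℕ) : 0 < prefixCtx (2 * m + 3) (blockSize m) 0 := by
  rw [prefixCtx_eq]
  have := blockSize_pos m
  positivity

/-- The prenex form of `SomeTotalR_{m+1}` as a `σ_n`-sentence. -/
def someTotalRSentence (n m : ℕ) (h : m + 1 ≤ n) : (sig n).Sentence :=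
  blockPrefix (2 * m + 3) true (blockSize m) 0
    (someTotalMatF n m h (fun _ => ⊤) (gridPos _ _ (prefixCtx_someTotal_pos m)))

theorem isSigma_someTotalRSentence {n m : ℕ} (h : m + 1 ≤ n) :
    IsSigma (2 * m + 3) (blockSize m) (someTotalRSentence n m h) :=
  isSigmaPi_blockPrefix le_rfl _ _ _ (isQF_someTotalMatF m h (fun _ => .top) _)

theorem realize_someTotalRSentence {n m : ℕ} (h : m + 1 ≤ n) (A : Type*)
    [(sig n).Structure A] [Nonempty A] :
    A ⊨ someTotalRSentence n m h ↔ STR (interpOf n A) m fun _ => True := by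
  rw [← blockQuant_someTotalMat]
  refine (realize_blockPrefix (blockSize_pos m) _ _ _ _ _).trans (BlockQuant.congr fun f => ?_)
  rw [realize_someTotalMatF m h _ (fun _ => True) fun _ => by simp]
  exact someTotalMat_dependsOn _ m _ _ _ fun i t ⟨hi, ht⟩ =>
    gridAppend_gridPos _ _ _ hi ht

end SomeTotalRPrenex

/-- for every n ≥ 1 the sentence `SomeTotalR_n` is logically equivalent to a
`Σ_{2n+1}` sentence. -/
theorem statement_7 (n : ℕ) (hn : 1 ≤ n) :
    ∃ (k : ℕ) (ψ : (sig n).Sentence), IsSigma (2 * n + 1) k ψ ∧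
      ∀ (A : Type) [(sig n).Structure A] [Nonempty A],
        A ⊨ ψ ↔ SomeTotalRSem n (interpOf n A) := by
  have h : n - 1 + 1 ≤ n := by omega
  refine ⟨SomeTotalRPrenex.blockSize (n - 1), SomeTotalRPrenex.someTotalRSentence n (n - 1) h, ?_,
    fun A _ _ => SomeTotalRPrenex.realize_someTotalRSentence h A⟩
  rw [show 2 * n + 1 = 2 * (n - 1) + 3 by omega]
  exact SomeTotalRPrenex.isSigma_someTotalRSentence h

end Paper
end

section
/- Let n, k ≥ 1, let U be a unary relation symbol and T a binary relation symbol, and let A and B be finite ordered structures with A* ⇛_{n,k} B*. Then A_U ⇛_{n,k} B_U and A_T ⇛_{n,k} B_T, where A_U (respectively B_U) is the structure obtained from A (respectively B) by adding its minimum and maximum elements to the interpretation of U, and A_T (respectively B_T) is obtained by adding the pair (minimum, maximum) to the interpretation of T. -/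
open FirstOrder Language

namespace Paper

variable {L : FirstOrder.Language} {α : Type*}

variable {A : Type*}

/-- The structure `A_U`: the minimum and maximum are added to the interpretation of the
unary relation symbol `u`; all other symbols keep their interpretation. -/
def addU (L : FirstOrder.Language) {A : Type*} [L.Structure A] (u : L.Relations 1)
    (mn mx : A) : L.Structure A where
  funMap := fun f v => FirstOrder.Language.Structure.funMap f v
  RelMap := fun {m} r v =>
    FirstOrder.Language.Structure.RelMap r v ∨
      ∃ h : m = 1, HEq r u ∧ (v (Fin.cast h.symm 0) = mn ∨ v (Fin.cast h.symm 0) = mx)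

/-- The structure `A_T`: the pair `(minimum, maximum)` is added to the interpretation of
the binary relation symbol `t`; all other symbols keep their interpretation. -/
def addT (L : FirstOrder.Language) {A : Type*} [L.Structure A] (t : L.Relations 2)
    (mn mx : A) : L.Structure A where
  funMap := fun f v => FirstOrder.Language.Structure.funMap f v
  RelMap := fun {m} r v =>
    FirstOrder.Language.Structure.RelMap r v ∨
      ∃ h : m = 2, HEq r t ∧ v (Fin.cast h.symm 0) = mn ∧ v (Fin.cast h.symm 1) = mx


/-! ### Auxiliary translation machinery for Statement 11 -/

section Statement11Aux

/-- Variable relabeling from sentences to formulas with two free variables. -/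
def emap {m : ℕ} : Empty ⊕ Fin m → (Fin 2) ⊕ Fin m := Sum.map (fun e => e.elim) id

lemma elim_comp_emap {A : Type*} (v : Empty → A) (w : Fin 2 → A) {m : ℕ} (xs : Fin m → A) :
    Sum.elim w xs ∘ emap = Sum.elim v xs := by
  funext x
  cases x with
  | inl e => exact e.elim
  | inr i => rfl

open Classical in
/-- Translation of an atomic relational formula, for the `addU` construction. -/
noncomputable def trRelU (u : L.Relations 1) {m l : ℕ} (r : L.Relations l)
    (v : Fin l → L.Term (Empty ⊕ Fin m)) : L.BoundedFormula (Fin 2) m :=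
  if h : l = 1 ∧ HEq r u then
    (BoundedFormula.rel r fun i => (v i).relabel emap) ⊔
      ((Term.bdEqual ((v (Fin.cast h.1.symm 0)).relabel emap) (Term.var (Sum.inl 0))) ⊔
       (Term.bdEqual ((v (Fin.cast h.1.symm 0)).relabel emap) (Term.var (Sum.inl 1))))
  else BoundedFormula.rel r fun i => (v i).relabel emap

open Classical in
/-- Translation of an atomic relational formula, for the `addT` construction. -/
noncomputable def trRelT (t : L.Relations 2) {m l : ℕ} (r : L.Relations l)
    (v : Fin l → L.Term (Empty ⊕ Fin m)) : L.BoundedFormula (Fin 2) m :=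
  if h : l = 2 ∧ HEq r t then
    (BoundedFormula.rel r fun i => (v i).relabel emap) ⊔
      ((Term.bdEqual ((v (Fin.cast h.1.symm 0)).relabel emap) (Term.var (Sum.inl 0))) ⊓
       (Term.bdEqual ((v (Fin.cast h.1.symm 1)).relabel emap) (Term.var (Sum.inl 1))))
  else BoundedFormula.rel r fun i => (v i).relabel emap

/-- Translation of sentences about `A_U` into formulas about `A` with two free variables. -/
noncomputable def trU (u : L.Relations 1) :
    ∀ {m : ℕ}, L.BoundedFormula Empty m → L.BoundedFormula (Fin 2) m
  | _, .falsum => .falsum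
  | _, .equal t₁ t₂ => .equal (t₁.relabel emap) (t₂.relabel emap)
  | _, .rel r v => trRelU u r v
  | _, .imp f g => (trU u f).imp (trU u g)
  | _, .all f => (trU u f).all

/-- Translation of sentences about `A_T` into formulas about `A` with two free variables. -/
noncomputable def trT (t : L.Relations 2) :
    ∀ {m : ℕ}, L.BoundedFormula Empty m → L.BoundedFormula (Fin 2) m
  | _, .falsum => .falsum
  | _, .equal t₁ t₂ => .equal (t₁.relabel emap) (t₂.relabel emap)
  | _, .rel r v => trRelT t r v
  | _, .imp f g => (trT t f).imp (trT t g)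
  | _, .all f => (trT t f).all

lemma trU_exN (u : L.Relations 1) :
    ∀ (j : ℕ) {m : ℕ} (ψ : L.BoundedFormula Empty (m + j)),
      trU u (exN j ψ) = exN j (trU u ψ)
  | 0, _, _ => rfl
  | j + 1, _, ψ => trU_exN u j ψ.ex

lemma trU_allN (u : L.Relations 1) :
    ∀ (j : ℕ) {m : ℕ} (ψ : L.BoundedFormula Empty (m + j)),
      trU u (allN j ψ) = allN j (trU u ψ)
  | 0, _, _ => rfl
  | j + 1, _, ψ => trU_allN u j ψ.all

lemma trT_exN (t : L.Relations 2) :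
    ∀ (j : ℕ) {m : ℕ} (ψ : L.BoundedFormula Empty (m + j)),
      trT t (exN j ψ) = exN j (trT t ψ)
  | 0, _, _ => rfl
  | j + 1, _, ψ => trT_exN t j ψ.ex

lemma trT_allN (t : L.Relations 2) :
    ∀ (j : ℕ) {m : ℕ} (ψ : L.BoundedFormula Empty (m + j)),
      trT t (allN j ψ) = allN j (trT t ψ)
  | 0, _, _ => rfl
  | j + 1, _, ψ => trT_allN t j ψ.all

lemma trU_isQF (u : L.Relations 1) {m : ℕ} {φ : L.BoundedFormula Empty m}
    (h : φ.IsQF) : (trU u φ).IsQF := by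
  induction h with
  | falsum => exact BoundedFormula.IsQF.falsum
  | of_isAtomic ha =>
      cases ha with
      | equal t₁ t₂ => exact (BoundedFormula.IsAtomic.equal _ _).isQF
      | rel R ts =>
          show (trRelU u R ts).IsQF
          unfold trRelU
          split
          · exact (BoundedFormula.IsAtomic.rel _ _).isQF.sup
              ((BoundedFormula.IsAtomic.equal _ _).isQF.sup
                (BoundedFormula.IsAtomic.equal _ _).isQF)
          · exact (BoundedFormula.IsAtomic.rel _ _).isQF
  | imp _ _ ih1 ih2 => exact ih1.imp ih2

lemma trT_isQF (t : L.Relations 2) {m : ℕ} {φ : L.BoundedFormula Empty m}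
    (h : φ.IsQF) : (trT t φ).IsQF := by
  induction h with
  | falsum => exact BoundedFormula.IsQF.falsum
  | of_isAtomic ha =>
      cases ha with
      | equal t₁ t₂ => exact (BoundedFormula.IsAtomic.equal _ _).isQF
      | rel R ts =>
          show (trRelT t R ts).IsQF
          unfold trRelT
          split
          · exact (BoundedFormula.IsAtomic.rel _ _).isQF.sup
              ((BoundedFormula.IsAtomic.equal _ _).isQF.inf
                (BoundedFormula.IsAtomic.equal _ _).isQF)
          · exact (BoundedFormula.IsAtomic.rel _ _).isQF
  | imp _ _ ih1 ih2 => exact ih1.imp ih2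

lemma trU_isSigmaPi (u : L.Relations 1) (k : ℕ) :
    ∀ (n : ℕ) (b : Bool) {m : ℕ} (φ : L.BoundedFormula Empty m),
      IsSigmaPi k b n m φ → IsSigmaPi k b n m (trU u φ)
  | 0, _, _, _, h => trU_isQF u h
  | n + 1, b, m, φ, h => by
      rcases h with h | ⟨j, hj, ψ, hψ, rfl⟩
      · exact Or.inl (trU_isSigmaPi u k n (!b) φ h)
      · refine Or.inr ⟨j, hj, trU u ψ, trU_isSigmaPi u k n (!b) ψ hψ, ?_⟩
        cases b
        · simp [trU_allN u j ψ]
        · simp [trU_exN u j ψ]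

lemma trT_isSigmaPi (t : L.Relations 2) (k : ℕ) :
    ∀ (n : ℕ) (b : Bool) {m : ℕ} (φ : L.BoundedFormula Empty m),
      IsSigmaPi k b n m φ → IsSigmaPi k b n m (trT t φ)
  | 0, _, _, _, h => trT_isQF t h
  | n + 1, b, m, φ, h => by
      rcases h with h | ⟨j, hj, ψ, hψ, rfl⟩
      · exact Or.inl (trT_isSigmaPi t k n (!b) φ h)
      · refine Or.inr ⟨j, hj, trT t ψ, trT_isSigmaPi t k n (!b) ψ hψ, ?_⟩
        cases b
        · simp [trT_allN t j ψ]
        · simp [trT_exN t j ψ]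

section Realize

variable {A : Type*} [S : L.Structure A]

lemma term_realize_addU (u : L.Relations 1) (mn mx : A) {β : Type*}
    (tm : L.Term β) (w : β → A) :
    @Term.realize L A (addU L u mn mx) β w tm = Term.realize w tm := by
  induction tm with
  | var => rfl
  | func f ts ih =>
      show @Structure.funMap L A (addU L u mn mx) _ f _ = @Structure.funMap L A S _ f _
      exact congrArg _ (funext ih)

lemma term_realize_addT (t : L.Relations 2) (mn mx : A) {β : Type*}
    (tm : L.Term β) (w : β → A) :
    @Term.realize L A (addT L t mn mx) β w tm = Term.realize w tm := by
  induction tm with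
  | var => rfl
  | func f ts ih =>
      show @Structure.funMap L A (addT L t mn mx) _ f _ = @Structure.funMap L A S _ f _
      exact congrArg _ (funext ih)

lemma relMap_addU (u : L.Relations 1) (mn mx : A) {l : ℕ}
    (R : L.Relations l) (w : Fin l → A) :
    @Structure.RelMap L A (addU L u mn mx) l R w ↔
      (Structure.RelMap R w ∨
        ∃ h : l = 1, HEq R u ∧
          (w (Fin.cast h.symm 0) = mn ∨ w (Fin.cast h.symm 0) = mx)) :=
  Iff.rfl

lemma relMap_addT (t : L.Relations 2) (mn mx : A) {l : ℕ}
    (R : L.Relations l) (w : Fin l → A) :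
    @Structure.RelMap L A (addT L t mn mx) l R w ↔
      (Structure.RelMap R w ∨
        ∃ h : l = 2, HEq R t ∧
          w (Fin.cast h.symm 0) = mn ∧ w (Fin.cast h.symm 1) = mx) :=
  Iff.rfl

lemma realize_trU (u : L.Relations 1) (mn mx : A) :
    ∀ {m : ℕ} (φ : L.BoundedFormula Empty m) (v : Empty → A) (xs : Fin m → A),
      @BoundedFormula.Realize L A (addU L u mn mx) Empty m φ v xs ↔
        (trU u φ).Realize ![mn, mx] xs := by
  intro m φ
  induction φ with
  | falsum => exact fun _ _ => Iff.rfl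
  | equal t₁ t₂ =>
      intro v xs
      show @Term.realize L A (addU L u mn mx) _ (Sum.elim v xs) t₁ =
            @Term.realize L A (addU L u mn mx) _ (Sum.elim v xs) t₂ ↔
          Term.realize (Sum.elim (![mn, mx]) xs) (t₁.relabel emap) =
            Term.realize (Sum.elim (![mn, mx]) xs) (t₂.relabel emap)
      rw [term_realize_addU, term_realize_addU, Term.realize_relabel, Term.realize_relabel,
        elim_comp_emap v]
  | rel R ts =>
      intro v xs
      refine Iff.trans (relMap_addU u mn mx R _) ?_
      have hw : ∀ i, @Term.realize L A (addU L u mn mx) _ (Sum.elim v xs) (ts i) =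
          Term.realize (Sum.elim (![mn, mx]) xs) ((ts i).relabel emap) := fun i => by
        rw [term_realize_addU, Term.realize_relabel, elim_comp_emap v]
      simp only [hw]
      show _ ↔ (trRelU u R ts).Realize ![mn, mx] xs
      unfold trRelU
      split
      case isTrue hc =>
        obtain ⟨h1, h2⟩ := hc
        subst h1
        have hR : R = u := eq_of_heq h2
        subst hR
        rw [BoundedFormula.realize_sup, BoundedFormula.realize_sup,
          BoundedFormula.realize_bdEqual, BoundedFormula.realize_bdEqual]
        constructor
        · rintro (hr | ⟨h, -, hc2 | hc2⟩)
          · exact Or.inl hr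
          · exact Or.inr (Or.inl hc2)
          · exact Or.inr (Or.inr hc2)
        · rintro (hr | (hc2 | hc2))
          · exact Or.inl hr
          · exact Or.inr ⟨rfl, HEq.rfl, Or.inl hc2⟩
          · exact Or.inr ⟨rfl, HEq.rfl, Or.inr hc2⟩
      case isFalse hc =>
        constructor
        · rintro (hr | ⟨h1, h2, -⟩)
          · exact hr
          · exact absurd ⟨h1, h2⟩ hc
        · exact fun hr => Or.inl hr
  | imp f g ihf ihg =>
      intro v xs
      exact imp_congr (ihf v xs) (ihg v xs)
  | all f ihf =>
      intro v xs
      exact forall_congr' fun a => ihf v (Fin.snoc xs a)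

lemma realize_trT (t : L.Relations 2) (mn mx : A) :
    ∀ {m : ℕ} (φ : L.BoundedFormula Empty m) (v : Empty → A) (xs : Fin m → A),
      @BoundedFormula.Realize L A (addT L t mn mx) Empty m φ v xs ↔
        (trT t φ).Realize ![mn, mx] xs := by
  intro m φ
  induction φ with
  | falsum => exact fun _ _ => Iff.rfl
  | equal t₁ t₂ =>
      intro v xs
      show @Term.realize L A (addT L t mn mx) _ (Sum.elim v xs) t₁ =
            @Term.realize L A (addT L t mn mx) _ (Sum.elim v xs) t₂ ↔
          Term.realize (Sum.elim (![mn, mx]) xs) (t₁.relabel emap) =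
            Term.realize (Sum.elim (![mn, mx]) xs) (t₂.relabel emap)
      rw [term_realize_addT, term_realize_addT, Term.realize_relabel, Term.realize_relabel,
        elim_comp_emap v]
  | rel R ts =>
      intro v xs
      refine Iff.trans (relMap_addT t mn mx R _) ?_
      have hw : ∀ i, @Term.realize L A (addT L t mn mx) _ (Sum.elim v xs) (ts i) =
          Term.realize (Sum.elim (![mn, mx]) xs) ((ts i).relabel emap) := fun i => by
        rw [term_realize_addT, Term.realize_relabel, elim_comp_emap v]
      simp only [hw]
      show _ ↔ (trRelT t R ts).Realize ![mn, mx] xs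
      unfold trRelT
      split
      case isTrue hc =>
        obtain ⟨h1, h2⟩ := hc
        subst h1
        have hR : R = t := eq_of_heq h2
        subst hR
        rw [BoundedFormula.realize_sup, BoundedFormula.realize_inf,
          BoundedFormula.realize_bdEqual, BoundedFormula.realize_bdEqual]
        constructor
        · rintro (hr | ⟨h, -, hc1, hc2⟩)
          · exact Or.inl hr
          · exact Or.inr ⟨hc1, hc2⟩
        · rintro (hr | ⟨hc1, hc2⟩)
          · exact Or.inl hr
          · exact Or.inr ⟨rfl, HEq.rfl, hc1, hc2⟩
      case isFalse hc =>
        constructor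
        · rintro (hr | ⟨h1, h2, -⟩)
          · exact hr
          · exact absurd ⟨h1, h2⟩ hc
        · exact fun hr => Or.inl hr
  | imp f g ihf ihg =>
      intro v xs
      exact imp_congr (ihf v xs) (ihg v xs)
  | all f ihf =>
      intro v xs
      exact forall_congr' fun a => ihf v (Fin.snoc xs a)

end Realize

end Statement11Aux

/-- if `A* ⇛_{n,k} B*` then `A_U ⇛_{n,k} B_U` and `A_T ⇛_{n,k} B_T`. -/
theorem statement_11 (L : FirstOrder.Language) (n k : ℕ) (hn : 1 ≤ n) (hk : 1 ≤ k)
    (le : L.Relations 2) (u : L.Relations 1) (t : L.Relations 2)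
    (A B : Type) [L.Structure A] [L.Structure B] [Finite A] [Finite B]
    (hOA : IsOrderedLe le A) (hOB : IsOrderedLe le B)
    (mnA mxA : A) (hmnA : IsMinimal le mnA) (hmxA : IsMaximal le mxA)
    (mnB mxB : B) (hmnB : IsMinimal le mnB) (hmxB : IsMaximal le mxB)
    (h : SigImpStar L n k A mnA mxA B mnB mxB) :
    (@SigImp L n k A B (addU L u mnA mxA) (addU L u mnB mxB)) ∧
    (@SigImp L n k A B (addT L t mnA mxA) (addT L t mnB mxB)) := by
  constructor
  · intro φ hφ hA
    have h1 : Formula.Realize (trU u φ) ![mnA, mxA] :=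
      (realize_trU u mnA mxA φ default default).mp hA
    have h2 := h (trU u φ) (trU_isSigmaPi u k n true φ hφ) h1
    exact (realize_trU u mnB mxB φ default default).mpr h2
  · intro φ hφ hA
    have h1 : Formula.Realize (trT t φ) ![mnA, mxA] :=
      (realize_trT t mnA mxA φ default default).mp hA
    have h2 := h (trT t φ) (trT_isSigmaPi t k n true φ hφ) h1
    exact (realize_trT t mnB mxB φ default default).mpr h2

end Paper
end

section
/- For all n, k ≥ 1 and all m_1, m_2 > ρ(n,k): L_{m_1}* ⇛_{n,k} L_{m_2}*. -/
open FirstOrder Language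

namespace Paper

variable {L : FirstOrder.Language} {α : Type*}

variable {A : Type*}

/-- The vocabulary `{≤, S}` with two binary relation symbols (`0` for `≤`, `1` for `S`). -/
def LOS : FirstOrder.Language where
  Functions := fun _ => Empty
  Relations := fun m => match m with | 2 => Fin 2 | _ => Empty

/-- The `{≤, S}`-structure on `{0, …, m-1}` with the natural linear order and with `S`
interpreted by a given relation on the underlying naturals. -/
def losStr (m : ℕ) (S : ℕ → ℕ → Prop) : LOS.Structure (Fin m) where
  funMap := fun f _ => Empty.elim f
  RelMap := fun {a} =>
    match a with
    | 0 => fun r _ => Empty.elim r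
    | 1 => fun r _ => Empty.elim r
    | 2 => fun (r : Fin 2) v => if r = 0 then v 0 ≤ v 1 else S (v 0).1 (v 1).1
    | _ + 3 => fun r _ => Empty.elim r

/-! Compare tuples `ā` of `L_{m₁}` and `b̄` of `L_{m₂}` that contain the endpoints through the
differences `a_y ∸ a_x` and `b_y ∸ b_x` truncated at a threshold `t`. At threshold `2` the tuples
satisfy the same quantifier-free formulas. If they agree at threshold `(j + 1) t`, any `j` new
points on one side can be matched on the other so that the extended tuples agree at threshold `t`;
hence agreement at `2 (k + 1)ⁿ` transfers `Σ_{n,k}` and `Π_{n,k}` formulas. The endpoints alone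
agree at that threshold because `2 (k + 1)ⁿ ≤ ρ(n, k) < m₁, m₂`. -/

section TruncDist

variable {ι κ : Type*}

/-- Truncated subtraction makes `a y - a x` vanish when `a y ≤ a x`, so this records both the
relative order of the points and their distances up to the threshold `t`. -/
def TruncDistEqOn (t : ℕ) (s : Set ι) (a b : ι → ℕ) : Prop :=
  ∀ x ∈ s, ∀ y ∈ s, min t (a y - a x) = min t (b y - b x)

namespace TruncDistEqOn

variable {t T : ℕ} {s u : Set ι} {a b b' : ι → ℕ}

theorem mono (h : TruncDistEqOn T u a b) (ht : t ≤ T) (hs : s ⊆ u) : TruncDistEqOn t s a b :=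
  fun x hx y hy => by have := h x (hs hx) y (hs hy); omega

theorem symm (h : TruncDistEqOn t s a b) : TruncDistEqOn t s b a :=
  fun x hx y hy => (h x hx y hy).symm

theorem congr_right (h : TruncDistEqOn t s a b) (hb : Set.EqOn b b' s) :
    TruncDistEqOn t s a b' :=
  fun x hx y hy => by rw [← hb hx, ← hb hy]; exact h x hx y hy

theorem le_of_le (h : TruncDistEqOn t s a b) (ht : 1 ≤ t) {x y : ι} (hx : x ∈ s) (hy : y ∈ s)
    (hxy : a x ≤ a y) : b x ≤ b y := by
  have := h y hy x hx
  omega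

end TruncDistEqOn

theorem truncDistEqOn_image {t : ℕ} {s : Set κ} {f : κ → ι} {a b : ι → ℕ} :
    TruncDistEqOn t (f '' s) a b ↔ TruncDistEqOn t s (a ∘ f) (b ∘ f) := by
  simp only [TruncDistEqOn, Set.forall_mem_image, Function.comp_apply]

theorem truncDistEqOn_pair {t : ℕ} {a b : ι → ℕ} {x y : ι} (ha : a x ≤ a y) (hb : b x ≤ b y)
    (hxy : min t (a y - a x) = min t (b y - b x)) : TruncDistEqOn t {x, y} a b := by
  simp only [TruncDistEqOn, Set.mem_insert_iff, Set.mem_singleton_iff]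
  rintro _ (rfl | rfl) _ (rfl | rfl) <;> omega

/-- Distances across the common point `c` are sums of distances on either side, and `min t`
of a sum is determined by `min t` of the summands. -/
theorem TruncDistEqOn.union {t : ℕ} {s u : Set ι} {a b : ι → ℕ} (ht : 1 ≤ t)
    (hs : TruncDistEqOn t s a b) (hu : TruncDistEqOn t u a b) {c : ι} (hcs : c ∈ s)
    (hcu : c ∈ u) (hsc : ∀ x ∈ s, a x ≤ a c) (huc : ∀ y ∈ u, a c ≤ a y) :
    TruncDistEqOn t (s ∪ u) a b := by
  have cross : ∀ x ∈ s, ∀ y ∈ u, min t (a y - a x) = min t (b y - b x) ∧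
      min t (a x - a y) = min t (b x - b y) := by
    intro x hx y hy
    have h₁ := hs x hx c hcs
    have h₂ := hu c hcu y hy
    have := hs.le_of_le ht hx hcs (hsc x hx)
    have := hu.le_of_le ht hcu hy (huc y hy)
    have := hsc x hx
    have := huc y hy
    constructor <;> omega
  rintro x (hx | hx) y (hy | hy)
  exacts [hs x hx y hy, (cross x hx y hy).1, (cross y hy x hx).2, hu x hx y hy]

theorem exists_split_of_min_eq {t T o g g' : ℕ} (hog : o ≤ g)
    (hg : min (T + t) g = min (T + t) g') :
    ∃ o' ≤ g', min t o = min t o' ∧ min T (g - o) = min T (g' - o') := by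
  by_cases hot : o < t
  · exact ⟨o, by omega, rfl, by omega⟩
  by_cases hgo : g - o < T
  · exact ⟨g' - (g - o), by omega, by omega, by omega⟩
  · exact ⟨t, by omega, by omega, by omega⟩

theorem exists_greatest_le {s : Set ι} (a : ι → ℕ) {c : ℕ} (h : ∃ p ∈ s, a p ≤ c) :
    ∃ p ∈ s, a p ≤ c ∧ ∀ x ∈ s, a x ≤ c → a x ≤ a p := by
  obtain ⟨p₀, hp₀, hp₀c⟩ := h
  let P := {x | x ∈ s ∧ a x ≤ c}
  obtain ⟨hp, hpc⟩ : Function.argminOn (c - a ·) P ⟨p₀, hp₀, hp₀c⟩ ∈ P :=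
    Function.argminOn_mem _ _ _
  refine ⟨_, hp, hpc, fun x hx hxc => ?_⟩
  have := Function.argminOn_le (c - a ·) P (a := x) ⟨hx, hxc⟩
  omega

theorem exists_least_ge {s : Set ι} (a : ι → ℕ) {c : ℕ} (h : ∃ q ∈ s, c ≤ a q) :
    ∃ q ∈ s, c ≤ a q ∧ ∀ x ∈ s, c ≤ a x → a q ≤ a x := by
  obtain ⟨q₀, hq₀, hq₀c⟩ := h
  let Q := {x | x ∈ s ∧ c ≤ a x}
  obtain ⟨hq, hqc⟩ : Function.argminOn a Q ⟨q₀, hq₀, hq₀c⟩ ∈ Q := Function.argminOn_mem _ _ _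
  exact ⟨_, hq, hqc, fun x hx hxc => Function.argminOn_le a Q (a := x) ⟨hx, hxc⟩⟩

/-- The new point is placed relative to its nearest old neighbours `p` below and `q` above:
near `p` it copies the distance to `p`, near `q` the distance to `q`, and otherwise it sits
at distance `t` above `p`. -/
theorem TruncDistEqOn.exists_insert [DecidableEq ι] {t T : ℕ} (ht : 1 ≤ t) (hT : 1 ≤ T)
    {S : Set ι} {a b : ι → ℕ} (h : TruncDistEqOn (T + t) S a b) {i : ι} (hi : i ∉ S)
    (hbelow : ∃ p ∈ S, a p ≤ a i) (habove : ∃ q ∈ S, a i ≤ a q) :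
    ∃ e, TruncDistEqOn t (insert i {x ∈ S | a x ≤ a i}) a (Function.update b i e) ∧
      TruncDistEqOn T (insert i {x ∈ S | a i ≤ a x}) a (Function.update b i e) := by
  obtain ⟨p, hpS, hpi, hp⟩ := exists_greatest_le a hbelow
  obtain ⟨q, hqS, hiq, hq⟩ := exists_least_ge a habove
  obtain ⟨o, hoq, hpo, hoq'⟩ :=
    exists_split_of_min_eq (o := a i - a p) (by omega) (h p hpS q hqS)
  have hbpq : b p ≤ b q := h.le_of_le (by omega) hpS hqS (by omega)
  set b₁ := Function.update b i (b p + o)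
  have hb₁ : Set.EqOn b b₁ S := fun x hx =>
    (Function.update_of_ne (ne_of_mem_of_not_mem hx hi) ..).symm
  have hb₁i : b₁ i = b p + o := Function.update_self ..
  refine ⟨b p + o, ?_, ?_⟩
  · have hS : TruncDistEqOn t {x ∈ S | a x ≤ a p} a b₁ :=
      (h.mono (by omega) (Set.sep_subset _ _)).congr_right (hb₁.mono (Set.sep_subset _ _))
    have hpair : TruncDistEqOn t {p, i} a b₁ :=
      truncDistEqOn_pair hpi (by rw [← hb₁ hpS, hb₁i]; omega) (by rw [← hb₁ hpS, hb₁i]; omega)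
    refine (hS.union ht hpair ⟨hpS, le_rfl⟩ (by simp) (fun x hx => hx.2) ?_).mono le_rfl ?_
    · simp only [Set.mem_insert_iff, Set.mem_singleton_iff, forall_eq_or_imp, forall_eq]
      exact ⟨le_rfl, hpi⟩
    · rintro x (rfl | ⟨hx, hxi⟩)
      · simp
      · exact Or.inl ⟨hx, hp x hx hxi⟩
  · have hS : TruncDistEqOn T {x ∈ S | a q ≤ a x} a b₁ :=
      (h.mono (by omega) (Set.sep_subset _ _)).congr_right (hb₁.mono (Set.sep_subset _ _))
    have hpair : TruncDistEqOn T {i, q} a b₁ :=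
      truncDistEqOn_pair hiq (by rw [← hb₁ hqS, hb₁i]; omega) (by rw [← hb₁ hqS, hb₁i]; omega)
    refine (hpair.union hT hS (by simp) ⟨hqS, le_rfl⟩ ?_ (fun x hx => hx.2)).mono le_rfl ?_
    · simp only [Set.mem_insert_iff, Set.mem_singleton_iff, forall_eq_or_imp, forall_eq]
      exact ⟨hiq, le_rfl⟩
    · rintro x (rfl | ⟨hx, hix⟩)
      · simp
      · exact Or.inr ⟨hx, hq x hx hix⟩

/-- Adding the new points in increasing order, each insertion costs one factor `t` of the
threshold on the part above the inserted point; the part below is finished. -/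
theorem TruncDistEqOn.exists_extension [DecidableEq ι] {t : ℕ} (ht : 1 ≤ t) {S : Set ι}
    {N : Finset ι} {a b : ι → ℕ} (hS : TruncDistEqOn ((N.card + 1) * t) S a b)
    (hdisj : Disjoint S N) (hbtw : ∀ i ∈ N, (∃ p ∈ S, a p ≤ a i) ∧ ∃ q ∈ S, a i ≤ a q) :
    ∃ b' : ι → ℕ, (∀ x ∉ N, b' x = b x) ∧ TruncDistEqOn t (S ∪ N) a b' := by
  induction N using Finset.induction_on_min_value a generalizing S b with
  | empty =>
    exact ⟨b, fun _ _ => rfl, by simpa using hS⟩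
  | insert i N hi hmin ih =>
    rw [Finset.card_insert_of_notMem hi, add_mul, one_mul] at hS
    have hSN (x) (hx : x ∈ S) : x ∉ insert i N := Set.disjoint_left.mp hdisj hx
    obtain ⟨hp, hq⟩ := hbtw i (Finset.mem_insert_self i N)
    obtain ⟨e, hlow, hup⟩ := hS.exists_insert ht (Nat.one_le_iff_ne_zero.mpr (by positivity))
      (fun hiS => hSN i hiS (Finset.mem_insert_self i N)) hp hq
    obtain ⟨b₂, hb₂, hup₂⟩ := ih hup
      (Set.disjoint_left.mpr <| by
        rintro x (rfl | ⟨hx, -⟩) hxN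
        exacts [hi hxN, hSN x hx (Finset.mem_insert_of_mem hxN)])
      (fun x hx => by
        obtain ⟨q, hqS, hxq⟩ := (hbtw x (Finset.mem_insert_of_mem hx)).2
        exact ⟨⟨i, Set.mem_insert i _, hmin x hx⟩,
          ⟨q, Set.mem_insert_of_mem i ⟨hqS, (hmin x hx).trans hxq⟩, hxq⟩⟩)
    refine ⟨b₂, fun x hx => ?_, ?_⟩
    · rw [Finset.mem_insert, not_or] at hx
      rw [hb₂ x hx.2, Function.update_of_ne hx.1]
    have hlow₂ : TruncDistEqOn t (insert i {x ∈ S | a x ≤ a i}) a b₂ := by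
      refine hlow.congr_right fun x hx => (hb₂ x ?_).symm
      rcases hx with rfl | ⟨hx, -⟩
      exacts [hi, fun hxN => hSN x hx (Finset.mem_insert_of_mem hxN)]
    refine (hlow₂.union ht hup₂ (Set.mem_insert i _) (Or.inl (Set.mem_insert i _)) ?_ ?_).mono
      le_rfl ?_
    · rintro x (rfl | ⟨-, hxi⟩)
      exacts [le_rfl, hxi]
    · rintro x ((rfl | ⟨-, hix⟩) | hx)
      exacts [le_rfl, hix, hmin x hx]
    · rintro x (hx | hx)
      · rcases le_total (a x) (a i) with hxi | hix
        exacts [Or.inl (Or.inr ⟨hx, hxi⟩), Or.inr (Or.inl (Or.inr ⟨hx, hix⟩))]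
      · rcases Finset.mem_insert.mp hx with rfl | hx
        exacts [Or.inl (Or.inl rfl), Or.inr (Or.inr hx)]

end TruncDist

section Realize

variable {M : Type*} [L.Structure M] {v : α → M}

theorem realize_exN : ∀ (j : ℕ) {m : ℕ} (φ : L.BoundedFormula α (m + j)) (xs : Fin m → M),
    (exN j φ).Realize v xs ↔ ∃ zs : Fin j → M, φ.Realize v (Fin.append xs zs)
  | 0, _, φ, xs => by rw [exN, Fin.exists_fin_zero_pi, Fin.append_right_nil _ _ rfl]; rfl
  | j + 1, _, φ, xs => by
    simp only [exN, realize_exN j, BoundedFormula.realize_ex, ← Fin.append_snoc]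
    exact ⟨fun ⟨_, _, h⟩ => ⟨_, h⟩,
      fun ⟨zs, h⟩ => ⟨Fin.init zs, zs (Fin.last j), by rwa [Fin.snoc_init_self]⟩⟩

theorem realize_allN : ∀ (j : ℕ) {m : ℕ} (φ : L.BoundedFormula α (m + j)) (xs : Fin m → M),
    (allN j φ).Realize v xs ↔ ∀ zs : Fin j → M, φ.Realize v (Fin.append xs zs)
  | 0, _, φ, xs => by rw [allN, Fin.forall_fin_zero_pi, Fin.append_right_nil _ _ rfl]; rfl
  | j + 1, _, φ, xs => by
    simp only [allN, realize_allN j, BoundedFormula.realize_all, ← Fin.append_snoc]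
    exact ⟨fun h zs => by simpa only [Fin.snoc_init_self] using h (Fin.init zs) (zs (Fin.last j)),
      fun h _ _ => h _⟩

end Realize

section Successor

instance finSuccStructure (m : ℕ) : LOS.Structure (Fin m) := losStr m (fun x y => y = x + 1)

variable {m₁ m₂ : ℕ} {v : α → Fin m₁} {w : α → Fin m₂}

theorem LOS.exists_eq_var {β : Type*} (tm : LOS.Term β) : ∃ s, tm = Term.var s := by
  cases tm with
  | var s => exact ⟨s, rfl⟩
  | func f _ => exact f.elim

/-- Threshold `2` suffices since the atomic formulas `x = y`, `x ≤ y` and `S x y` only see the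
distances `0` and `1`. -/
theorem realize_iff_of_isQF {j : ℕ} {φ : LOS.BoundedFormula α j} (hφ : φ.IsQF)
    {xs : Fin j → Fin m₁} {ys : Fin j → Fin m₂}
    (h : TruncDistEqOn 2 Set.univ (Fin.val ∘ Sum.elim v xs) (Fin.val ∘ Sum.elim w ys)) :
    φ.Realize v xs ↔ φ.Realize w ys := by
  have hd (s s' : α ⊕ Fin j) := h s trivial s' trivial
  simp only [Function.comp_apply] at hd
  induction hφ with
  | falsum => exact Iff.rfl
  | of_isAtomic hat =>
    cases hat with
    | equal t₁ t₂ =>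
      obtain ⟨s₁, rfl⟩ := LOS.exists_eq_var t₁
      obtain ⟨s₂, rfl⟩ := LOS.exists_eq_var t₂
      have := hd s₁ s₂
      have := hd s₂ s₁
      simp only [BoundedFormula.realize_bdEqual, Term.realize_var, Fin.ext_iff]
      omega
    | @rel l R ts =>
      match l, R with
      | 2, R =>
        obtain ⟨s₀, hs₀⟩ := LOS.exists_eq_var (ts 0)
        obtain ⟨s₁, hs₁⟩ := LOS.exists_eq_var (ts 1)
        have := hd s₀ s₁
        have := hd s₁ s₀
        rcases R with ⟨_ | _ | _, hR⟩
        · change (ts 0).realize (Sum.elim v xs) ≤ (ts 1).realize (Sum.elim v xs) ↔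
            (ts 0).realize (Sum.elim w ys) ≤ (ts 1).realize (Sum.elim w ys)
          simp only [hs₀, hs₁, Term.realize_var, Fin.le_def]
          omega
        · change ((ts 1).realize (Sum.elim v xs)).val = ((ts 0).realize (Sum.elim v xs)).val + 1 ↔
            ((ts 1).realize (Sum.elim w ys)).val = ((ts 0).realize (Sum.elim w ys)).val + 1
          simp only [hs₀, hs₁, Term.realize_var]
          omega
        · omega
  | imp _ _ ih₁ ih₂ =>
    simp only [BoundedFormula.realize_imp]
    exact imp_congr ih₁ ih₂

theorem isCompl_range_castAdd_natAdd (α : Type*) (j j' : ℕ) :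
    IsCompl (Set.range (Sum.map (id : α → α) (Fin.castAdd j')))
      (Set.range fun i : Fin j' => (Sum.inr (Fin.natAdd j i) : α ⊕ Fin (j + j'))) := by
  constructor
  · rw [Set.disjoint_left]
    rintro _ ⟨x | s, rfl⟩ ⟨i, hi⟩ <;> simp [Fin.ext_iff] at hi
    omega
  · rw [codisjoint_iff_le_sup]
    rintro (x | i) -
    · exact Or.inl ⟨Sum.inl x, rfl⟩
    · exact Fin.addCases (fun i => Or.inl ⟨Sum.inr i, rfl⟩) (fun i => Or.inr ⟨i, rfl⟩) i

theorem exists_append_truncDistEqOn {t j j' : ℕ} (ht : 1 ≤ t)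
    (hv : ∀ x, ∃ p q, v p ≤ x ∧ x ≤ v q) {xs : Fin j → Fin m₁} {ys : Fin j → Fin m₂}
    (h : TruncDistEqOn ((j' + 1) * t) Set.univ (Fin.val ∘ Sum.elim v xs) (Fin.val ∘ Sum.elim w ys))
    (zs : Fin j' → Fin m₁) :
    ∃ zs' : Fin j' → Fin m₂, TruncDistEqOn t Set.univ
      (Fin.val ∘ Sum.elim v (Fin.append xs zs)) (Fin.val ∘ Sum.elim w (Fin.append ys zs')) := by
  classical
  let old : α ⊕ Fin j → α ⊕ Fin (j + j') := Sum.map id (Fin.castAdd j')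
  let new : Fin j' → α ⊕ Fin (j + j') := fun i => Sum.inr (Fin.natAdd j i)
  have hcompl : IsCompl (Set.range old) ↑(Finset.univ.image new) := by
    simpa [old, new] using isCompl_range_castAdd_natAdd α j j'
  let a := Fin.val ∘ Sum.elim v (Fin.append xs zs)
  -- the values of `b` at the new positions are placeholders, overwritten by the extension
  let b : α ⊕ Fin (j + j') → ℕ := Sum.elim (Fin.val ∘ w) (Fin.append (Fin.val ∘ ys) 0)
  have hS : TruncDistEqOn (((Finset.univ.image new).card + 1) * t) (Set.range old) a b := by
    rw [Finset.card_image_of_injective _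
        fun _ _ h => Fin.natAdd_injective _ _ (Sum.inr_injective h),
      Finset.card_univ, Fintype.card_fin, ← Set.image_univ, truncDistEqOn_image]
    convert h using 2 <;> funext s <;> rcases s with x | i <;> simp [old, a, b]
  obtain ⟨b', hb', hext⟩ := hS.exists_extension ht hcompl.disjoint (by
    simp only [Finset.mem_image, Finset.mem_univ, true_and, Set.exists_range_iff]
    rintro _ ⟨i, rfl⟩
    obtain ⟨p, q, hp, hq⟩ := hv (zs i)
    exact ⟨⟨Sum.inl p, by simpa [old, new, a]⟩, ⟨Sum.inl q, by simpa [old, new, a]⟩⟩)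
  rw [show Set.range old ∪ _ = Set.univ from hcompl.sup_eq_top] at hext
  have hold' (s) : b' (old s) = b (old s) := hb' _ (Set.disjoint_left.mp hcompl.disjoint ⟨s, rfl⟩)
  have hlt (i : Fin j') : b' (new i) < m₂ := by
    obtain ⟨p, q, -, hq⟩ := hv (zs i)
    have := hext.le_of_le ht trivial trivial (x := new i) (y := old (Sum.inl q))
      (by simpa [a, new, old] using hq)
    have := hold' (Sum.inl q)
    simp only [old, b, Sum.map_inl, Sum.elim_inl, Function.comp_apply, id] at *
    omega
  refine ⟨fun i => ⟨b' (new i), hlt i⟩, ?_⟩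
  convert hext using 1
  funext s
  rcases s with x | i
  · simpa [old, b] using (hold' (Sum.inl x)).symm
  · refine Fin.addCases (fun i => ?_) (fun i => ?_) i
    · simpa [old, b] using (hold' (Sum.inr i)).symm
    · simp [new]

theorem realize_of_truncDistEqOn (k : ℕ) (hv : ∀ x, ∃ p q, v p ≤ x ∧ x ≤ v q)
    (hw : ∀ y, ∃ p q, w p ≤ y ∧ y ≤ w q) {n : ℕ} {b : Bool} {j : ℕ}
    {φ : LOS.BoundedFormula α j} (hφ : IsSigmaPi k b n j φ) {xs : Fin j → Fin m₁}
    {ys : Fin j → Fin m₂}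
    (h : TruncDistEqOn (2 * (k + 1) ^ n) Set.univ (Fin.val ∘ Sum.elim v xs)
      (Fin.val ∘ Sum.elim w ys)) :
    φ.Realize v xs → φ.Realize w ys := by
  induction n generalizing b j φ xs ys with
  | zero =>
    have hφ : φ.IsQF := by cases b <;> exact hφ
    exact (realize_iff_of_isQF hφ (by simpa using h)).mp
  | succ n ih =>
    have ht : 1 ≤ 2 * (k + 1) ^ n := Nat.one_le_iff_ne_zero.mpr (by positivity)
    rcases hφ with hφ | ⟨j', hj', ψ, hψ, rfl⟩
    · exact ih hφ (h.mono (by gcongr <;> omega) le_rfl)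
    have h' : TruncDistEqOn ((j' + 1) * (2 * (k + 1) ^ n)) Set.univ (Fin.val ∘ Sum.elim v xs)
        (Fin.val ∘ Sum.elim w ys) :=
      h.mono (by rw [pow_succ]; nlinarith) le_rfl
    cases b
    · simp only [Bool.false_eq_true, ite_false, realize_allN]
      intro hr zs'
      obtain ⟨zs, hzs⟩ := exists_append_truncDistEqOn ht hw h'.symm zs'
      exact ih hψ hzs.symm (hr zs)
    · simp only [ite_true, realize_exN]
      rintro ⟨zs, hr⟩
      obtain ⟨zs', hzs⟩ := exists_append_truncDistEqOn ht hv h' zs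
      exact ⟨zs', ih hψ hzs hr⟩

end Successor

theorem two_mul_pow_le_rho (k : ℕ) {n : ℕ} (hn : 1 ≤ n) : 2 * (k + 1) ^ n ≤ rho n k := by
  induction n, hn using Nat.le_induction with
  | base => simp only [rho, pow_one]; omega
  | succ n hn ih =>
    obtain ⟨n, rfl⟩ : ∃ n', n = n' + 1 := ⟨n - 1, by omega⟩
    calc 2 * (k + 1) ^ (n + 1 + 1) = (k + 1) * (2 * (k + 1) ^ (n + 1)) := by ring
      _ ≤ (k + 2) * (rho (n + 1) k + 1) := by gcongr <;> omega
      _ = rho (n + 1 + 1) k := rfl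

/-- if `m1, m2 > ρ(n,k)` then `L_{m1}* ⇛_{n,k} L_{m2}*`.
(`L_m` is `{1, …, m}` with the natural order and the successor relation, presented
0-indexed on `Fin m`.) -/
theorem statement_12 (n k : ℕ) (hn : 1 ≤ n) (m1 m2 : ℕ)
    (h1 : rho n k < m1) (h2 : rho n k < m2) :
    @SigImpStar LOS n k (Fin m1) (losStr m1 (fun x y => y = x + 1))
      ⟨0, by omega⟩ ⟨m1 - 1, by omega⟩
      (Fin m2) (losStr m2 (fun x y => y = x + 1))
      ⟨0, by omega⟩ ⟨m2 - 1, by omega⟩ := by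
  have hρ := two_mul_pow_le_rho k hn
  intro φ hφ
  refine realize_of_truncDistEqOn k ?_ ?_ hφ (xs := default) (ys := default) ?_
  · exact fun x => ⟨0, 1, Nat.zero_le _, Nat.le_sub_one_of_lt x.isLt⟩
  · exact fun y => ⟨0, 1, Nat.zero_le _, Nat.le_sub_one_of_lt y.isLt⟩
  · rintro (x | x) - (y | y) -
    · fin_cases x <;> fin_cases y <;> simp
      omega
    exacts [y.elim0, x.elim0, x.elim0]

end Paper
end
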